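/- arXiv:1610.02600 — 4 statements merged into one kernel-verified Lean document; each statement's English description precedes it below -/
import Mathlib

section
/- Let (A₁, D₁) and (A₂, D₂) be relative σ-unital pairs and X an (A₁,D₁)–(A₂,D₂)-relative imprimitivity bimodule. Then for every x in the subset X_D, the inner products ⟨x | x⟩_{A₁} belongs to D₁ and ⟨x | x⟩_{A₂} belongs to D₂. -/
open Filter Finset Topology

/-- A sum `∑ f n = 1` in the strict topology of the multiplier algebra `M(B)`:
the partial sums converge to the identity multiplier when multiplied by any element of `B`. -/
def StrictPartialSumOne {B : Type} [NonUnitalCStarAlgebra B] (f : ℕ → B) : Prop :=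
  (∀ b : B, Tendsto (fun N => (∑ n ∈ Finset.range N, f n) * b) atTop (𝓝 b)) ∧
  (∀ b : B, Tendsto (fun N => b * ∑ n ∈ Finset.range N, f n) atTop (𝓝 b))

/-- `D` is a C*-subalgebra of `A` (a norm-closed star subalgebra). -/
def IsCStarSubalgebra {A : Type} [NonUnitalCStarAlgebra A] (D : Set A) : Prop :=
  IsClosed D ∧ (0 : A) ∈ D ∧ (∀ x ∈ D, ∀ y ∈ D, x + y ∈ D) ∧
    (∀ x ∈ D, ∀ y ∈ D, x * y ∈ D) ∧ (∀ (c : ℂ), ∀ x ∈ D, c • x ∈ D) ∧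
    (∀ x ∈ D, star x ∈ D)

/-- `D` contains a countable (two-sided) approximate unit for `A`. -/
def HasCountableApproxUnitIn {A : Type} [NonUnitalCStarAlgebra A] (D : Set A) : Prop :=
  ∃ e : ℕ → A, (∀ n, e n ∈ D) ∧
    (∀ a : A, Tendsto (fun n => e n * a) atTop (𝓝 a)) ∧
    (∀ a : A, Tendsto (fun n => a * e n) atTop (𝓝 a))

/-- `a : ℕ → A` is a relative approximate unit for the pair `(A, D)`. -/
def IsRelApproxUnit {A : Type} [NonUnitalCStarAlgebra A] (D : Set A) (a : ℕ → A) : Prop :=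
  (∀ n, ∀ d ∈ D, star (a n) * d * a n ∈ D ∧ a n * d * star (a n) ∈ D) ∧
  StrictPartialSumOne (fun n => star (a n) * a n) ∧
  (∀ d ∈ D, ∀ n m : ℕ, n ≠ m → a n * d * star (a m) = 0)

/-- The pair `(A, D)` is relative σ-unital. -/
def RelSigmaUnital (A : Type) [NonUnitalCStarAlgebra A] (D : Set A) : Prop :=
  IsCStarSubalgebra D ∧ HasCountableApproxUnitIn D ∧ ∃ a : ℕ → A, IsRelApproxUnit D a

/-- An `A`–`B`-imprimitivity bimodule structure on `X`. -/
structure ImprimitivityBimodule (A B X : Type) [NonUnitalCStarAlgebra A]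
    [NonUnitalCStarAlgebra B] [NormedAddCommGroup X] [NormedSpace ℂ X] : Type where
  lsmul : A → X → X
  rsmul : X → B → X
  linner : X → X → A
  rinner : X → X → B
  lsmul_add : ∀ a x y, lsmul a (x + y) = lsmul a x + lsmul a y
  add_lsmul : ∀ a b x, lsmul (a + b) x = lsmul a x + lsmul b x
  mul_lsmul : ∀ a b x, lsmul (a * b) x = lsmul a (lsmul b x)
  lsmul_smulc : ∀ (c : ℂ) a x, lsmul (c • a) x = c • lsmul a x
  rsmul_add : ∀ x y b, rsmul (x + y) b = rsmul x b + rsmul y b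
  add_rsmul : ∀ x a b, rsmul x (a + b) = rsmul x a + rsmul x b
  rsmul_mul : ∀ x a b, rsmul x (a * b) = rsmul (rsmul x a) b
  rsmul_smulc : ∀ (c : ℂ) x b, rsmul x (c • b) = c • rsmul x b
  lsmul_rsmul : ∀ a x b, rsmul (lsmul a x) b = lsmul a (rsmul x b)
  linner_add_left : ∀ x y z, linner (x + y) z = linner x z + linner y z
  linner_star : ∀ x y, star (linner x y) = linner y x
  linner_lsmul_left : ∀ a x y, linner (lsmul a x) y = a * linner x y
  linner_smul_left : ∀ (c : ℂ) x y, linner (c • x) y = c • linner x y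
  rinner_add_right : ∀ x y z, rinner x (y + z) = rinner x y + rinner x z
  rinner_star : ∀ x y, star (rinner x y) = rinner y x
  rinner_rsmul_right : ∀ x y b, rinner x (rsmul y b) = rinner x y * b
  rinner_smul_right : ∀ (c : ℂ) x y, rinner x (c • y) = c • rinner x y
  linner_self_pos : ∀ x, ∃ a, linner x x = star a * a
  rinner_self_pos : ∀ x, ∃ b, rinner x x = star b * b
  imprim : ∀ x y z, lsmul (linner x y) z = rsmul x (rinner y z)
  norm_linner_self : ∀ x, ‖linner x x‖ = ‖x‖ ^ 2
  norm_rinner_self : ∀ x, ‖rinner x x‖ = ‖x‖ ^ 2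
  full_left : ∀ a : A,
    a ∈ closure ((Submodule.span ℂ {c : A | ∃ x y, c = linner x y} : Submodule ℂ A) : Set A)
  full_right : ∀ b : B,
    b ∈ closure ((Submodule.span ℂ {c : B | ∃ x y, c = rinner x y} : Submodule ℂ B) : Set B)

namespace ImprimitivityBimodule

variable {A B X : Type} [NonUnitalCStarAlgebra A] [NonUnitalCStarAlgebra B]
  [NormedAddCommGroup X] [NormedSpace ℂ X]

/-- The subset `X_D` of a relative imprimitivity bimodule. -/
def memXD (J : ImprimitivityBimodule A B X) (D₁ : Set A) (D₂ : Set B) (x : X) : Prop :=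
  (∀ d₂ ∈ D₂, J.linner (J.rsmul x d₂) x ∈ D₁) ∧
  (∀ d₁ ∈ D₁, J.rinner x (J.lsmul d₁ x) ∈ D₂)

/-- `x` is a relative left basis for `J` with respect to `(D₁, D₂)`. -/
def IsRelLeftBasis (J : ImprimitivityBimodule A B X) (D₁ : Set A) (D₂ : Set B)
    (x : ℕ → X) : Prop :=
  (∀ n, J.memXD D₁ D₂ (x n)) ∧
  StrictPartialSumOne (fun n => J.rinner (x n) (x n)) ∧
  (∀ d₂ ∈ D₂, ∀ n m : ℕ, n ≠ m → J.linner (J.rsmul (x n) d₂) (x m) = 0)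

/-- `y` is a relative right basis for `J` with respect to `(D₁, D₂)`. -/
def IsRelRightBasis (J : ImprimitivityBimodule A B X) (D₁ : Set A) (D₂ : Set B)
    (y : ℕ → X) : Prop :=
  (∀ n, J.memXD D₁ D₂ (y n)) ∧
  StrictPartialSumOne (fun n => J.linner (y n) (y n)) ∧
  (∀ d₁ ∈ D₁, ∀ n m : ℕ, n ≠ m → J.rinner (y n) (J.lsmul d₁ (y m)) = 0)

/-- `J` is an `(A,D₁)`–`(B,D₂)`-relative imprimitivity bimodule. -/
def IsRelative (J : ImprimitivityBimodule A B X) (D₁ : Set A) (D₂ : Set B) : Prop :=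
  (∃ x : ℕ → X, J.IsRelLeftBasis D₁ D₂ x) ∧ (∃ y : ℕ → X, J.IsRelRightBasis D₁ D₂ y)

end ImprimitivityBimodule

/-- A witness for relative Morita equivalence of `(A, D₁)` and `(B, D₂)`. -/
structure RMEWitness (A B : Type) [NonUnitalCStarAlgebra A] [NonUnitalCStarAlgebra B]
    (D₁ : Set A) (D₂ : Set B) : Type 1 where
  X : Type
  [instGroup : NormedAddCommGroup X]
  [instSpace : NormedSpace ℂ X]
  J : ImprimitivityBimodule A B X
  rel : J.IsRelative D₁ D₂

/-- Relative Morita equivalence of the pairs `(A, D₁)` and `(B, D₂)`. -/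
def RME (A : Type) [NonUnitalCStarAlgebra A] (D₁ : Set A)
    (B : Type) [NonUnitalCStarAlgebra B] (D₂ : Set B) : Prop :=
  Nonempty (RMEWitness A B D₁ D₂)



lemma aux_bst_bound {E : Type} [NormedAddCommGroup E] [NormedSpace ℂ E] [CompleteSpace E]
    (g : ℕ → E →L[ℂ] E) (h : ∀ b, ∃ l, Tendsto (fun n => g n b) atTop (𝓝 l)) :
    ∃ K : ℝ, 0 ≤ K ∧ ∀ n b, ‖g n b‖ ≤ K * ‖b‖ := by
  obtain ⟨C, hC⟩ := banach_steinhaus (g := g) (fun b => by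
    obtain ⟨l, hl⟩ := h b
    obtain ⟨c, hc⟩ := (hl.norm).bddAbove_range
    exact ⟨c, fun n => hc ⟨n, rfl⟩⟩)
  refine ⟨max C 0, le_max_right _ _, fun n b => ?_⟩
  calc ‖g n b‖ ≤ ‖g n‖ * ‖b‖ := (g n).le_opNorm b
    _ ≤ max C 0 * ‖b‖ :=
        mul_le_mul_of_nonneg_right (le_trans (hC n) (le_max_left _ _)) (norm_nonneg _)

lemma aux_mul_tendsto_zero {C : Type} [NonUnitalCStarAlgebra C] {q d : ℕ → C} {K : ℝ}
    (hK : ∀ n, ‖q n * d n‖ ≤ K * ‖d n‖) (hd : Tendsto d atTop (𝓝 0)) :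
    Tendsto (fun n => q n * d n - d n) atTop (𝓝 0) := by
  have h0 : Tendsto (fun n => ‖d n‖) atTop (𝓝 0) := by simpa using hd.norm
  have hdn : Tendsto (fun n => K * ‖d n‖ + ‖d n‖) atTop (𝓝 0) := by
    simpa using (h0.const_mul K).add h0
  refine squeeze_zero_norm (fun n => ?_) hdn
  calc ‖q n * d n - d n‖ ≤ ‖q n * d n‖ + ‖d n‖ := norm_sub_le _ _
    _ ≤ K * ‖d n‖ + ‖d n‖ := by linarith [hK n]

/-- Cauchy–Schwarz-type bound (up to a constant 4) via polarization. -/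
lemma aux_cs {Y C : Type} [NormedAddCommGroup Y] [NormedSpace ℂ Y] [NonUnitalCStarAlgebra C]
    (p : Y → Y → C)
    (hadd : ∀ x y z, p (x + y) z = p x z + p y z)
    (hsmul : ∀ (c : ℂ) x y, p (c • x) y = c • p x y)
    (hstar : ∀ x y, star (p x y) = p y x)
    (hnorm : ∀ x, ‖p x x‖ = ‖x‖ ^ 2)
    (u v : Y) : ‖p u v‖ ≤ 4 * (‖u‖ * ‖v‖) := by
  have hzero_l : ∀ y, p 0 y = 0 := by
    intro y
    have h := hadd 0 0 y
    rw [add_zero] at h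
    exact (left_eq_add.mp h)
  have hzero_r : ∀ y, p y 0 = 0 := by
    intro y
    rw [← hstar, hzero_l, star_zero]
  have hadd_r : ∀ x y z, p x (y + z) = p x y + p x z := by
    intro x y z
    rw [← hstar, hadd, star_add, hstar, hstar]
  have hsmul_r : ∀ (c : ℂ) x y, p x (c • y) = (starRingEnd ℂ c) • p x y := by
    intro c x y
    rw [← hstar, hsmul, star_smul, hstar, Complex.star_def]
  have key : ∀ w z : Y, ‖p w z‖ ≤ (‖w‖ + ‖z‖) ^ 2 := by
    intro w z
    have hexp : ∀ c : ℂ, p (w + c • z) (w + c • z)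
        = p w w + c • p z w + (starRingEnd ℂ c) • p w z + (c * starRingEnd ℂ c) • p z z := by
      intro c
      simp only [hadd, hadd_r, hsmul, hsmul_r, smul_smul]
      module
    have hid : p w z = (4 : ℂ)⁻¹ • (p (w + (1:ℂ) • z) (w + (1:ℂ) • z)
        - p (w + (-1:ℂ) • z) (w + (-1:ℂ) • z)
        + Complex.I • p (w + Complex.I • z) (w + Complex.I • z)
        - Complex.I • p (w + (-Complex.I) • z) (w + (-Complex.I) • z)) := by
      rw [hexp 1, hexp (-1), hexp Complex.I, hexp (-Complex.I)]
      simp only [map_one, map_neg, Complex.conj_I, one_smul, neg_neg, neg_smul, smul_smul,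
        smul_add, smul_sub, smul_neg, mul_one, mul_neg, one_mul, neg_mul]
      match_scalars <;> simp [Complex.I_mul_I] <;> ring
    have hb : ∀ c : ℂ, ‖c‖ = 1 → ‖p (w + c • z) (w + c • z)‖ ≤ (‖w‖ + ‖z‖) ^ 2 := by
      intro c hc
      rw [hnorm]
      have hle : ‖w + c • z‖ ≤ ‖w‖ + ‖z‖ := by
        calc ‖w + c • z‖ ≤ ‖w‖ + ‖c • z‖ := norm_add_le _ _
          _ = ‖w‖ + ‖z‖ := by rw [norm_smul, hc, one_mul]
      exact pow_le_pow_left₀ (norm_nonneg _) hle 2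
    set M := (‖w‖ + ‖z‖) ^ 2 with hM
    have hA := hb 1 (by norm_num)
    have hB := hb (-1) (by norm_num)
    have hCc := hb Complex.I (by simp)
    have hD := hb (-Complex.I) (by simp)
    rw [hid, norm_smul]
    have hnorm4 : ‖(4:ℂ)⁻¹‖ = (4:ℝ)⁻¹ := by simp
    rw [hnorm4]
    set PA := p (w + (1:ℂ) • z) (w + (1:ℂ) • z)
    set PB := p (w + (-1:ℂ) • z) (w + (-1:ℂ) • z)
    set PC := p (w + Complex.I • z) (w + Complex.I • z)
    set PD := p (w + (-Complex.I) • z) (w + (-Complex.I) • z)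
    have hic : ‖Complex.I • PC‖ = ‖PC‖ := by rw [norm_smul, Complex.norm_I, one_mul]
    have hidn : ‖Complex.I • PD‖ = ‖PD‖ := by rw [norm_smul, Complex.norm_I, one_mul]
    have t1 : ‖PA - PB + Complex.I • PC - Complex.I • PD‖
        ≤ ‖PA - PB + Complex.I • PC‖ + ‖Complex.I • PD‖ := norm_sub_le _ _
    have t2 : ‖PA - PB + Complex.I • PC‖ ≤ ‖PA - PB‖ + ‖Complex.I • PC‖ := norm_add_le _ _
    have t3 : ‖PA - PB‖ ≤ ‖PA‖ + ‖PB‖ := norm_sub_le _ _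
    have htot : ‖PA - PB + Complex.I • PC - Complex.I • PD‖ ≤ M + M + M + M := by
      rw [hic] at t2; rw [hidn] at t1
      linarith
    have hfin : (4:ℝ)⁻¹ * (M + M + M + M) = M := by ring
    nlinarith [htot]
  rcases eq_or_ne u 0 with rfl | hu
  · simp [hzero_l]
  rcases eq_or_ne v 0 with rfl | hv
  · simp [hzero_r]
  have hun : (0:ℝ) < ‖u‖ := norm_pos_iff.mpr hu
  have hvn : (0:ℝ) < ‖v‖ := norm_pos_iff.mpr hv
  set t : ℝ := ‖v‖ / ‖u‖ with htd
  have ht : 0 < t := div_pos hvn hun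
  have hk := key ((t:ℂ) • u) v
  rw [hsmul] at hk
  simp only [norm_smul] at hk
  have hts : ‖(t:ℂ)‖ = t := by rw [Complex.norm_real, Real.norm_of_nonneg ht.le]
  rw [hts] at hk
  have htu : t * ‖u‖ = ‖v‖ := div_mul_cancel₀ _ (ne_of_gt hun)
  rw [htu] at hk
  have h2 : t * ‖p u v‖ ≤ 4 * ‖v‖ ^ 2 := by nlinarith
  have h3 : t * (4 * (‖u‖ * ‖v‖)) = 4 * ‖v‖ ^ 2 := by
    rw [← htu]
    ring
  exact le_of_mul_le_mul_left (by linarith) ht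


namespace ImprimitivityBimodule

variable {A B X : Type} [NonUnitalCStarAlgebra A] [NonUnitalCStarAlgebra B]
  [NormedAddCommGroup X] [NormedSpace ℂ X] (J : ImprimitivityBimodule A B X)

lemma linner_sub_left' (x y z : X) : J.linner (x - y) z = J.linner x z - J.linner y z := by
  have h := J.linner_add_left (x - y) y z
  rw [sub_add_cancel] at h
  exact eq_sub_of_add_eq h.symm

lemma linner_sub_right' (x y z : X) : J.linner x (y - z) = J.linner x y - J.linner x z := by
  calc J.linner x (y - z) = star (J.linner (y - z) x) := (J.linner_star _ _).symm
    _ = star (J.linner y x - J.linner z x) := by rw [J.linner_sub_left']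
    _ = J.linner x y - J.linner x z := by rw [star_sub, J.linner_star, J.linner_star]

lemma linner_lsmul_right' (a : A) (x y : X) :
    J.linner x (J.lsmul a y) = J.linner x y * star a := by
  calc J.linner x (J.lsmul a y) = star (J.linner (J.lsmul a y) x) := (J.linner_star _ _).symm
    _ = star (a * J.linner y x) := by rw [J.linner_lsmul_left]
    _ = star (J.linner y x) * star a := by rw [star_mul]
    _ = J.linner x y * star a := by rw [J.linner_star]

lemma rinner_add_left' (x y z : X) : J.rinner (x + y) z = J.rinner x z + J.rinner y z := by
  calc J.rinner (x + y) z = star (J.rinner z (x + y)) := (J.rinner_star _ _).symm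
    _ = star (J.rinner z x + J.rinner z y) := by rw [J.rinner_add_right]
    _ = J.rinner x z + J.rinner y z := by rw [star_add, J.rinner_star, J.rinner_star]

lemma rinner_sub_left' (x y z : X) : J.rinner (x - y) z = J.rinner x z - J.rinner y z := by
  have h := J.rinner_add_left' (x - y) y z
  rw [sub_add_cancel] at h
  exact eq_sub_of_add_eq h.symm

lemma rinner_sub_right' (x y z : X) : J.rinner x (y - z) = J.rinner x y - J.rinner x z := by
  calc J.rinner x (y - z) = star (J.rinner (y - z) x) := (J.rinner_star _ _).symm
    _ = star (J.rinner y x - J.rinner z x) := by rw [J.rinner_sub_left']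
    _ = J.rinner x y - J.rinner x z := by rw [star_sub, J.rinner_star, J.rinner_star]

lemma rinner_rsmul_left' (b : B) (x y : X) :
    J.rinner (J.rsmul x b) y = star b * J.rinner x y := by
  calc J.rinner (J.rsmul x b) y = star (J.rinner y (J.rsmul x b)) := (J.rinner_star _ _).symm
    _ = star (J.rinner y x * b) := by rw [J.rinner_rsmul_right]
    _ = star b * star (J.rinner y x) := by rw [star_mul]
    _ = star b * J.rinner x y := by rw [J.rinner_star]

lemma norm_linner_le' (u v : X) : ‖J.linner u v‖ ≤ 4 * (‖u‖ * ‖v‖) :=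
  aux_cs J.linner J.linner_add_left J.linner_smul_left J.linner_star J.norm_linner_self u v

lemma norm_rinner_le' (u v : X) : ‖J.rinner u v‖ ≤ 4 * (‖u‖ * ‖v‖) := by
  have h := aux_cs (fun a b => J.rinner b a)
    (fun x y z => J.rinner_add_right z x y)
    (fun c x y => J.rinner_smul_right c y x)
    (fun x y => J.rinner_star y x)
    J.norm_rinner_self v u
  simpa [mul_comm] using h

end ImprimitivityBimodule

/-- For `x` in the subset `X_D` of a relative imprimitivity bimodule between pairs
`(A, D₁)` and `(B, D₂)`, the inner products `⟨x | x⟩_A` and `⟨x | x⟩_B` belong to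
`D₁` and `D₂` respectively. -/
theorem inner_self_mem_of_memXD
    {A B X : Type} [NonUnitalCStarAlgebra A] [NonUnitalCStarAlgebra B]
    [NormedAddCommGroup X] [NormedSpace ℂ X]
    (J : ImprimitivityBimodule A B X) (D₁ : Set A) (D₂ : Set B)
    (hD₁ : IsCStarSubalgebra D₁) (hD₂ : IsCStarSubalgebra D₂)
    (happrox₁ : HasCountableApproxUnitIn D₁) (happrox₂ : HasCountableApproxUnitIn D₂)
    (x : X) (hx : J.memXD D₁ D₂ x) :
    J.linner x x ∈ D₁ ∧ J.rinner x x ∈ D₂ := by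
  constructor
  · -- Left inner product lands in D₁, via an approximate unit of D₂.
    obtain ⟨e, heD, heL, heR⟩ := happrox₂
    obtain ⟨K, hK0, hKb⟩ := aux_bst_bound
      (fun n => (ContinuousLinearMap.mul ℂ B).flip (e n))
      (fun b => ⟨b, by simpa using heR b⟩)
    have hKb' : ∀ n (b : B), ‖star (e n) * b‖ ≤ K * ‖b‖ := by
      intro n b
      have h1 : star (e n) * b = star (star b * e n) := by rw [star_mul, star_star]
      rw [h1, norm_star]
      have := hKb n (star b)
      simpa [norm_star] using this
    set r := J.rinner x x with hr
    set d : ℕ → B := fun n => r * e n - r with hdd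
    have hd : Tendsto d atTop (𝓝 0) := by
      have := (heR r).sub (tendsto_const_nhds (x := r))
      simpa using this
    set w : ℕ → X := fun n => J.rsmul x (e n) - x with hww
    have hw_inner : ∀ n, J.rinner (w n) (w n) = star (e n) * d n - d n := by
      intro n
      calc J.rinner (w n) (w n)
          = J.rinner (J.rsmul x (e n)) (w n) - J.rinner x (w n) := J.rinner_sub_left' _ _ _
        _ = star (e n) * J.rinner x (w n) - J.rinner x (w n) := by rw [J.rinner_rsmul_left']
        _ = star (e n) * d n - d n := by
            rw [show J.rinner x (w n) = d n by
              simp only [hww]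
              rw [J.rinner_sub_right', J.rinner_rsmul_right]]
    have hT0 : Tendsto (fun n => J.rinner (w n) (w n)) atTop (𝓝 0) := by
      simp only [hw_inner]
      exact aux_mul_tendsto_zero (fun n => hKb' n (d n)) hd
    have hwnorm : Tendsto (fun n => ‖w n‖) atTop (𝓝 0) := by
      have h2 : Tendsto (fun n => ‖w n‖ ^ 2) atTop (𝓝 0) := by
        have := hT0.norm
        simpa [J.norm_rinner_self] using this
      have h3 := (Real.continuous_sqrt.tendsto 0).comp h2
      have h4 : ∀ n, Real.sqrt (‖w n‖ ^ 2) = ‖w n‖ := fun n => Real.sqrt_sq (norm_nonneg _)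
      simpa [Function.comp_def, h4] using h3
    have hlin : Tendsto (fun n => J.linner (J.rsmul x (e n)) x) atTop (𝓝 (J.linner x x)) := by
      rw [tendsto_iff_norm_sub_tendsto_zero]
      have hb : ∀ n, ‖J.linner (J.rsmul x (e n)) x - J.linner x x‖ ≤ 4 * (‖w n‖ * ‖x‖) := by
        intro n
        have heq : J.linner (J.rsmul x (e n)) x - J.linner x x = J.linner (w n) x :=
          (J.linner_sub_left' _ _ _).symm
        rw [heq]
        exact J.norm_linner_le' _ _
      have hlim : Tendsto (fun n => 4 * (‖w n‖ * ‖x‖)) atTop (𝓝 0) := by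
        have := (hwnorm.mul_const ‖x‖).const_mul 4
        simpa using this
      exact squeeze_zero (fun n => norm_nonneg _) hb hlim
    exact hD₁.1.mem_of_tendsto hlin
      (Filter.Eventually.of_forall fun n => hx.1 (e n) (heD n))
  · -- Right inner product lands in D₂, via an approximate unit of D₁.
    obtain ⟨f, hfD, hfL, hfR⟩ := happrox₁
    obtain ⟨K, hK0, hKb⟩ := aux_bst_bound
      (fun n => ContinuousLinearMap.mul ℂ A (f n))
      (fun a => ⟨a, by simpa using hfL a⟩)
    have hKb' : ∀ n (a : A), ‖f n * a‖ ≤ K * ‖a‖ := by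
      intro n a
      have := hKb n a
      simpa using this
    set s := J.linner x x with hs
    have hss : star s = s := J.linner_star x x
    set d : ℕ → A := fun n => s * star (f n) - s with hdd
    have hd : Tendsto d atTop (𝓝 0) := by
      have hds : ∀ n, d n = star (f n * s - s) := by
        intro n
        rw [star_sub, star_mul, hss]
      have h1 : Tendsto (fun n => f n * s - s) atTop (𝓝 0) := by
        have := (hfL s).sub (tendsto_const_nhds (x := s))
        simpa using this
      have h2 := (continuous_star.tendsto (0 : A)).comp h1
      rw [show d = fun n => star (f n * s - s) from funext hds]
      simpa [Function.comp_def] using h2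
    set w : ℕ → X := fun n => J.lsmul (f n) x - x with hww
    have hw_inner : ∀ n, J.linner (w n) (w n) = f n * d n - d n := by
      intro n
      calc J.linner (w n) (w n)
          = J.linner (J.lsmul (f n) x) (w n) - J.linner x (w n) := J.linner_sub_left' _ _ _
        _ = f n * J.linner x (w n) - J.linner x (w n) := by rw [J.linner_lsmul_left]
        _ = f n * d n - d n := by
            rw [show J.linner x (w n) = d n by
              simp only [hww]
              rw [J.linner_sub_right', J.linner_lsmul_right']]
    have hT0 : Tendsto (fun n => J.linner (w n) (w n)) atTop (𝓝 0) := by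
      simp only [hw_inner]
      exact aux_mul_tendsto_zero (fun n => hKb' n (d n)) hd
    have hwnorm : Tendsto (fun n => ‖w n‖) atTop (𝓝 0) := by
      have h2 : Tendsto (fun n => ‖w n‖ ^ 2) atTop (𝓝 0) := by
        have := hT0.norm
        simpa [J.norm_linner_self] using this
      have h3 := (Real.continuous_sqrt.tendsto 0).comp h2
      have h4 : ∀ n, Real.sqrt (‖w n‖ ^ 2) = ‖w n‖ := fun n => Real.sqrt_sq (norm_nonneg _)
      simpa [Function.comp_def, h4] using h3
    have hlin : Tendsto (fun n => J.rinner x (J.lsmul (f n) x)) atTop (𝓝 (J.rinner x x)) := by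
      rw [tendsto_iff_norm_sub_tendsto_zero]
      have hb : ∀ n, ‖J.rinner x (J.lsmul (f n) x) - J.rinner x x‖ ≤ 4 * (‖x‖ * ‖w n‖) := by
        intro n
        have heq : J.rinner x (J.lsmul (f n) x) - J.rinner x x = J.rinner x (w n) :=
          (J.rinner_sub_right' _ _ _).symm
        rw [heq]
        exact J.norm_rinner_le' _ _
      have hlim : Tendsto (fun n => 4 * (‖x‖ * ‖w n‖)) atTop (𝓝 0) := by
        have := (hwnorm.const_mul ‖x‖).const_mul 4
        simpa [mul_assoc] using this
      exact squeeze_zero (fun n => norm_nonneg _) hb hlim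
    exact hD₂.1.mem_of_tendsto hlin
      (Filter.Eventually.of_forall fun n => hx.2 (f n) (hfD n))
end

section
/- Let X be an (A₁,D₁)–(A₂,D₂)-relative imprimitivity bimodule with relative left basis {x_n}. Then every z ∈ X satisfies z = ∑_{n=1}^∞ ⟨z | x_n⟩_{A₁} · x_n, with convergence in the norm of X, and ⟨x_n | x_m⟩_{A₁} = 0 for n ≠ m. -/
open Filter Finset Topology

section Aux

variable {A B X : Type} [NonUnitalCStarAlgebra A] [NonUnitalCStarAlgebra B]
  [NormedAddCommGroup X] [NormedSpace ℂ X] (J : ImprimitivityBimodule A B X)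

lemma aux_linner_zero_left (y : X) : J.linner 0 y = 0 := by
  have h : J.linner 0 y + J.linner 0 y = J.linner 0 y := by
    rw [← J.linner_add_left, add_zero]
  exact add_eq_left.mp h

lemma aux_linner_neg_left (u y : X) : J.linner (-u) y = -(J.linner u y) := by
  have h : J.linner u y + J.linner (-u) y = 0 := by
    rw [← J.linner_add_left, add_neg_cancel, aux_linner_zero_left]
  exact eq_neg_of_add_eq_zero_right h

lemma aux_linner_sub_left (u v y : X) :
    J.linner (u - v) y = J.linner u y - J.linner v y := by
  rw [sub_eq_add_neg, J.linner_add_left, aux_linner_neg_left, sub_eq_add_neg]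

lemma aux_linner_sub_right (w u v : X) :
    J.linner w (u - v) = J.linner w u - J.linner w v := by
  rw [← J.linner_star, aux_linner_sub_left, star_sub, J.linner_star, J.linner_star]

lemma aux_rinner_zero_right (y : X) : J.rinner y 0 = 0 := by
  have h : J.rinner y 0 + J.rinner y 0 = J.rinner y 0 := by
    rw [← J.rinner_add_right, add_zero]
  exact add_eq_left.mp h

lemma aux_rinner_neg_right (y v : X) : J.rinner y (-v) = -(J.rinner y v) := by
  have h : J.rinner y v + J.rinner y (-v) = 0 := by
    rw [← J.rinner_add_right, add_neg_cancel, aux_rinner_zero_right]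
  exact eq_neg_of_add_eq_zero_right h

lemma aux_rinner_sub_right (y u v : X) :
    J.rinner y (u - v) = J.rinner y u - J.rinner y v := by
  rw [sub_eq_add_neg, J.rinner_add_right, aux_rinner_neg_right, sub_eq_add_neg]

lemma aux_rinner_sub_left (u v y : X) :
    J.rinner (u - v) y = J.rinner u y - J.rinner v y := by
  rw [← J.rinner_star, aux_rinner_sub_right, star_sub, J.rinner_star, J.rinner_star]

lemma aux_rinner_rsmul_left (u v : X) (b : B) :
    J.rinner (J.rsmul u b) v = star b * J.rinner u v := by
  rw [← J.rinner_star, J.rinner_rsmul_right, star_mul, J.rinner_star]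

/-- Core order-theoretic inequality, proved in the unitization. -/
lemma aux_core_norm_le {p q r c : A} (hq : q - p + r = star c * c)
    (hp : ∃ d, p = d * star d) : ‖p‖ ≤ ‖q‖ + ‖r‖ := by
  letI _instP : PartialOrder (Unitization ℂ A) := CStarAlgebra.spectralOrder _
  letI _instS : StarOrderedRing (Unitization ℂ A) := CStarAlgebra.spectralOrderedRing _
  have h1 : (0 : Unitization ℂ A) ≤ (p : Unitization ℂ A) := by
    obtain ⟨d, rfl⟩ := hp
    rw [Unitization.inr_mul, Unitization.inr_star]
    exact mul_star_self_nonneg _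
  have h2 : (p : Unitization ℂ A) ≤ (q : Unitization ℂ A) + (r : Unitization ℂ A) := by
    rw [← sub_nonneg]
    have key : ((q : Unitization ℂ A) + (r : Unitization ℂ A)) - (p : Unitization ℂ A)
        = ((q - p + r : A) : Unitization ℂ A) := by
      rw [Unitization.inr_add, Unitization.inr_sub]
      abel
    rw [key, hq, Unitization.inr_mul, Unitization.inr_star]
    exact star_mul_self_nonneg _
  calc ‖p‖ = ‖(p : Unitization ℂ A)‖ := (Unitization.norm_inr _).symm
    _ ≤ ‖(q : Unitization ℂ A) + (r : Unitization ℂ A)‖ :=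
        CStarAlgebra.norm_le_norm_of_nonneg_of_le h1 h2
    _ ≤ ‖(q : Unitization ℂ A)‖ + ‖(r : Unitization ℂ A)‖ := norm_add_le _ _
    _ = ‖q‖ + ‖r‖ := by rw [Unitization.norm_inr, Unitization.norm_inr]

lemma aux_quad {al U V : ℝ} (hal : 0 ≤ al) (hU : 0 ≤ U) (hV : 0 ≤ V)
    (h : ∀ s : ℝ, 0 < s → 2 * s * al ≤ U + s ^ 2 * V) : al ^ 2 ≤ U * V := by
  rcases eq_or_lt_of_le hal with h0 | halpos
  · rw [← h0]
    simpa using mul_nonneg hU hV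
  rcases eq_or_lt_of_le hV with hV0 | hVpos
  · exfalso
    have hs : (0:ℝ) < (U + 1) / (2 * al) := by positivity
    have h' := h _ hs
    rw [← hV0] at h'
    have h2 : 2 * ((U + 1) / (2 * al)) * al = U + 1 := by
      field_simp
    rw [h2] at h'
    nlinarith [h']
  · have h' := h (al / V) (div_pos halpos hVpos)
    have hVne : V ≠ 0 := hVpos.ne'
    have h'' : al ^ 2 / V ≤ U := by
      have e1 : 2 * (al / V) * al = 2 * (al ^ 2 / V) := by ring
      have e2 : (al / V) ^ 2 * V = al ^ 2 / V := by
        field_simp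
      rw [e1, e2] at h'
      linarith
    calc al ^ 2 = al ^ 2 / V * V := by field_simp
      _ ≤ U * V := mul_le_mul_of_nonneg_right h'' hVpos.le

/-- Cauchy–Schwarz for the left inner product. -/
lemma aux_cauchy_schwarz (u v : X) : ‖J.linner u v‖ ≤ ‖u‖ * ‖v‖ := by
  have hstar_a : star (J.linner u v) = J.linner v u := J.linner_star u v
  have hstar_rv : star (J.linner v v) = J.linner v v := J.linner_star v v
  have key : ∀ s : ℝ, 0 < s →
      2 * s * (‖J.linner u v‖ * ‖J.linner u v‖) ≤
        ‖u‖ ^ 2 + s ^ 2 * (‖J.linner u v‖ * (‖v‖ ^ 2 * ‖J.linner u v‖)) := by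
    intro s hs
    obtain ⟨c, hc⟩ := J.linner_self_pos (u - J.lsmul (((s : ℝ) : ℂ) • J.linner u v) v)
    have hsstar : star (((s : ℝ) : ℂ)) = ((s : ℝ) : ℂ) := by
      simp
    have e1 : J.linner (J.lsmul (((s : ℝ) : ℂ) • J.linner u v) v) u
        = ((s : ℝ) : ℂ) • (J.linner u v * star (J.linner u v)) := by
      rw [J.linner_lsmul_left, ← hstar_a, smul_mul_assoc]
    have e2 : J.linner u (J.lsmul (((s : ℝ) : ℂ) • J.linner u v) v)
        = ((s : ℝ) : ℂ) • (J.linner u v * star (J.linner u v)) := by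
      rw [← J.linner_star, e1, star_smul, star_mul, star_star, hsstar]
    have ewv : J.linner (J.lsmul (((s : ℝ) : ℂ) • J.linner u v) v) v
        = ((s : ℝ) : ℂ) • (J.linner u v * J.linner v v) := by
      rw [J.linner_lsmul_left, smul_mul_assoc]
    have evw : J.linner v (J.lsmul (((s : ℝ) : ℂ) • J.linner u v) v)
        = ((s : ℝ) : ℂ) • (J.linner v v * star (J.linner u v)) := by
      rw [← J.linner_star, ewv, star_smul, star_mul, hstar_rv, hsstar]
    have e3 : J.linner (J.lsmul (((s : ℝ) : ℂ) • J.linner u v) v)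
        (J.lsmul (((s : ℝ) : ℂ) • J.linner u v) v)
        = ((s ^ 2 : ℝ) : ℂ) • (J.linner u v * (J.linner v v * star (J.linner u v))) := by
      rw [J.linner_lsmul_left, evw, mul_smul_comm, smul_mul_assoc, smul_smul]
      congr 1
      push_cast
      ring
    have hexp : J.linner (u - J.lsmul (((s : ℝ) : ℂ) • J.linner u v) v)
        (u - J.lsmul (((s : ℝ) : ℂ) • J.linner u v) v)
        = J.linner u u
          - ((2 * s : ℝ) : ℂ) • (J.linner u v * star (J.linner u v))
          + ((s ^ 2 : ℝ) : ℂ) • (J.linner u v * (J.linner v v * star (J.linner u v))) := by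
      rw [aux_linner_sub_left, aux_linner_sub_right, aux_linner_sub_right, e1, e2, e3]
      have h2 : ((2 * s : ℝ) : ℂ) • (J.linner u v * star (J.linner u v))
          = ((s : ℝ) : ℂ) • (J.linner u v * star (J.linner u v))
            + ((s : ℝ) : ℂ) • (J.linner u v * star (J.linner u v)) := by
        rw [← add_smul]
        congr 1
        push_cast
        ring
      rw [h2]
      abel
    have hq := hexp.symm.trans hc
    have hp : ∃ d, ((2 * s : ℝ) : ℂ) • (J.linner u v * star (J.linner u v))
        = d * star d := by
      refine ⟨((Real.sqrt (2 * s) : ℝ) : ℂ) • J.linner u v, ?_⟩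
      rw [star_smul, mul_smul_comm, smul_mul_assoc, smul_smul]
      congr 1
      rw [show star (((Real.sqrt (2 * s) : ℝ) : ℂ)) = ((Real.sqrt (2 * s) : ℝ) : ℂ) by simp]
      rw [← Complex.ofReal_mul, Real.mul_self_sqrt (by positivity)]
    have hcore := aux_core_norm_le hq hp
    have hnp : ‖((2 * s : ℝ) : ℂ) • (J.linner u v * star (J.linner u v))‖
        = 2 * s * (‖J.linner u v‖ * ‖J.linner u v‖) := by
      rw [norm_smul, CStarRing.norm_self_mul_star]
      simp [abs_of_pos hs]
    have hnq : ‖J.linner u u‖ = ‖u‖ ^ 2 := J.norm_linner_self u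
    have hnr : ‖((s ^ 2 : ℝ) : ℂ) • (J.linner u v * (J.linner v v * star (J.linner u v)))‖
        ≤ s ^ 2 * (‖J.linner u v‖ * (‖v‖ ^ 2 * ‖J.linner u v‖)) := by
      rw [norm_smul]
      have hb : ‖J.linner u v * (J.linner v v * star (J.linner u v))‖
          ≤ ‖J.linner u v‖ * (‖v‖ ^ 2 * ‖J.linner u v‖) := by
        calc ‖J.linner u v * (J.linner v v * star (J.linner u v))‖
            ≤ ‖J.linner u v‖ * ‖J.linner v v * star (J.linner u v)‖ := norm_mul_le _ _
          _ ≤ ‖J.linner u v‖ * (‖J.linner v v‖ * ‖star (J.linner u v)‖) := by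
              gcongr
              exact norm_mul_le _ _
          _ = ‖J.linner u v‖ * (‖v‖ ^ 2 * ‖J.linner u v‖) := by
              rw [J.norm_linner_self, norm_star]
      have hns : ‖((s ^ 2 : ℝ) : ℂ)‖ = s ^ 2 := by
        simp [abs_of_nonneg (sq_nonneg s)]
      rw [hns]
      have : 0 ≤ s ^ 2 := sq_nonneg s
      exact mul_le_mul_of_nonneg_left hb this
    rw [hnp, hnq] at hcore
    linarith [hcore, hnr]
  have hq2 := aux_quad (mul_nonneg (norm_nonneg _) (norm_nonneg _))
    (sq_nonneg ‖u‖) (by positivity) key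
  rcases eq_or_lt_of_le (norm_nonneg (J.linner u v)) with h0 | hpos
  · rw [← h0]
    positivity
  · by_contra hcon
    push_neg at hcon
    have h3 := mul_lt_mul'' hcon hcon
      (mul_nonneg (norm_nonneg u) (norm_nonneg v))
      (mul_nonneg (norm_nonneg u) (norm_nonneg v))
    have h4 := mul_lt_mul_of_pos_right h3 (mul_pos hpos hpos)
    nlinarith [hq2, h4]

lemma aux_bdd {B : Type} [NonUnitalCStarAlgebra B] (b : ℕ → B)
    (h : ∀ c : B, Filter.Tendsto (fun k => b k * c) Filter.atTop (𝓝 c)) :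
    ∃ C, ∀ k, ‖b k‖ ≤ C := by
  obtain ⟨C', hC'⟩ : ∃ C', ∀ k, ‖ContinuousLinearMap.mul ℂ B (b k)‖ ≤ C' := by
    apply banach_steinhaus
    intro c
    obtain ⟨C, hC⟩ := (h c).norm.bddAbove_range
    exact ⟨C, fun k => hC (Set.mem_range_self k)⟩
  refine ⟨C', fun k => ?_⟩
  rcases eq_or_lt_of_le (norm_nonneg (b k)) with h0 | hpos
  · rw [← h0]
    exact le_trans (norm_nonneg _) (hC' k)
  · have key : ‖b k‖ * ‖b k‖ ≤ ‖ContinuousLinearMap.mul ℂ B (b k)‖ * ‖b k‖ := by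
      calc ‖b k‖ * ‖b k‖ = ‖b k * star (b k)‖ := (CStarRing.norm_self_mul_star).symm
        _ = ‖ContinuousLinearMap.mul ℂ B (b k) (star (b k))‖ := rfl
        _ ≤ ‖ContinuousLinearMap.mul ℂ B (b k)‖ * ‖star (b k)‖ :=
            ContinuousLinearMap.le_opNorm _ _
        _ = ‖ContinuousLinearMap.mul ℂ B (b k)‖ * ‖b k‖ := by rw [norm_star]
    exact le_trans (le_of_mul_le_mul_right key hpos) (hC' k)

lemma aux_tendsto_rsmul (z : X) (b : ℕ → B)
    (h1 : Filter.Tendsto (fun k => J.rinner z z * b k) Filter.atTop (𝓝 (J.rinner z z)))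
    (hC : ∃ C, ∀ k, ‖b k‖ ≤ C) :
    Filter.Tendsto (fun k => J.rsmul z (b k)) Filter.atTop (𝓝 z) := by
  obtain ⟨C, hCb⟩ := hC
  rw [tendsto_iff_norm_sub_tendsto_zero]
  have hE : ∀ k, J.rinner (J.rsmul z (b k) - z) (J.rsmul z (b k) - z)
      = star (b k) * (J.rinner z z * b k - J.rinner z z)
        - (J.rinner z z * b k - J.rinner z z) := by
    intro k
    rw [aux_rinner_sub_left, aux_rinner_sub_right, aux_rinner_sub_right,
      aux_rinner_rsmul_left, J.rinner_rsmul_right, aux_rinner_rsmul_left, mul_sub]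
  have hnorm : ∀ k, ‖J.rsmul z (b k) - z‖
      = Real.sqrt ‖J.rinner (J.rsmul z (b k) - z) (J.rsmul z (b k) - z)‖ := by
    intro k
    rw [J.norm_rinner_self, Real.sqrt_sq (norm_nonneg _)]
  have hd : Filter.Tendsto (fun k => ‖J.rinner z z * b k - J.rinner z z‖)
      Filter.atTop (𝓝 0) := tendsto_iff_norm_sub_tendsto_zero.mp h1
  have hE0 : Filter.Tendsto
      (fun k => ‖J.rinner (J.rsmul z (b k) - z) (J.rsmul z (b k) - z)‖)
      Filter.atTop (𝓝 0) := by
    refine squeeze_zero (fun k => norm_nonneg _)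
      (fun k => ?_) (by simpa using hd.const_mul (C + 1))
    rw [hE k]
    calc ‖star (b k) * (J.rinner z z * b k - J.rinner z z)
          - (J.rinner z z * b k - J.rinner z z)‖
        ≤ ‖star (b k) * (J.rinner z z * b k - J.rinner z z)‖
          + ‖J.rinner z z * b k - J.rinner z z‖ := norm_sub_le _ _
      _ ≤ ‖star (b k)‖ * ‖J.rinner z z * b k - J.rinner z z‖
          + ‖J.rinner z z * b k - J.rinner z z‖ := by
          gcongr
          exact norm_mul_le _ _
      _ ≤ (C + 1) * ‖J.rinner z z * b k - J.rinner z z‖ := by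
          rw [norm_star]
          have := hCb k
          nlinarith [norm_nonneg (J.rinner z z * b k - J.rinner z z)]
  have hsq := (Real.continuous_sqrt.tendsto 0).comp hE0
  rw [Real.sqrt_zero] at hsq
  have : (fun k => ‖J.rsmul z (b k) - z‖)
      = fun k => Real.sqrt ‖J.rinner (J.rsmul z (b k) - z) (J.rsmul z (b k) - z)‖ := by
    funext k
    exact hnorm k
  rw [this]
  exact hsq

end Aux

/-- If `{x n}` is a relative left basis for a relative imprimitivity bimodule `X`
between `(A, D₁)` and `(B, D₂)`, then every `z ∈ X` satisfies
`z = ∑ ⟨z | x n⟩_A · x n` (norm convergence), and `⟨x n | x m⟩_A = 0` for `n ≠ m`. -/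
theorem relLeftBasis_expansion
    {A B X : Type} [NonUnitalCStarAlgebra A] [NonUnitalCStarAlgebra B]
    [NormedAddCommGroup X] [NormedSpace ℂ X]
    (J : ImprimitivityBimodule A B X) (D₁ : Set A) (D₂ : Set B)
    (hD₁ : IsCStarSubalgebra D₁) (hD₂ : IsCStarSubalgebra D₂)
    (happrox₁ : HasCountableApproxUnitIn D₁) (happrox₂ : HasCountableApproxUnitIn D₂)
    (x : ℕ → X) (hx : J.IsRelLeftBasis D₁ D₂ x) :
    (∀ z : X,
      Filter.Tendsto (fun N => ∑ n ∈ Finset.range N, J.lsmul (J.linner z (x n)) (x n))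
        Filter.atTop (𝓝 z)) ∧
    (∀ n m : ℕ, n ≠ m → J.linner (x n) (x m) = 0) := by
  constructor
  · intro z
    have hfun : (fun N => ∑ n ∈ Finset.range N, J.lsmul (J.linner z (x n)) (x n))
        = fun N => J.rsmul z (∑ n ∈ Finset.range N, J.rinner (x n) (x n)) := by
      funext N
      rw [show J.rsmul z (∑ n ∈ Finset.range N, J.rinner (x n) (x n))
          = ∑ n ∈ Finset.range N, J.rsmul z (J.rinner (x n) (x n)) from
        map_sum (AddMonoidHom.mk' (J.rsmul z) (J.add_rsmul z)) _ _]
      exact Finset.sum_congr rfl fun n _ => J.imprim z (x n) (x n)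
    rw [hfun]
    exact aux_tendsto_rsmul J z _ (hx.2.1.2 (J.rinner z z)) (aux_bdd _ hx.2.1.1)
  · intro n m hnm
    obtain ⟨e, heD, heL, heR⟩ := happrox₂
    have h0 : ∀ k, J.linner (J.rsmul (x n) (e k)) (x m) = 0 :=
      fun k => hx.2.2 (e k) (heD k) n m hnm
    have ht : Filter.Tendsto (fun k => J.rsmul (x n) (e k)) Filter.atTop (𝓝 (x n)) :=
      aux_tendsto_rsmul J (x n) e (heR _) (aux_bdd e heL)
    have hlin : ∀ k, ‖J.linner (x n) (x m)‖ ≤ ‖x n - J.rsmul (x n) (e k)‖ * ‖x m‖ := by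
      intro k
      calc ‖J.linner (x n) (x m)‖
          = ‖J.linner (x n - J.rsmul (x n) (e k)) (x m)‖ := by
            rw [aux_linner_sub_left, h0 k, sub_zero]
        _ ≤ _ := aux_cauchy_schwarz J _ _
    have hlim : Filter.Tendsto (fun k => ‖x n - J.rsmul (x n) (e k)‖ * ‖x m‖)
        Filter.atTop (𝓝 0) := by
      have h1 := tendsto_iff_norm_sub_tendsto_zero.mp ht
      have h2 : Filter.Tendsto (fun k => ‖x n - J.rsmul (x n) (e k)‖)
          Filter.atTop (𝓝 0) := by
        simpa [norm_sub_rev] using h1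
      simpa using h2.mul_const ‖x m‖
    have hle : ‖J.linner (x n) (x m)‖ ≤ 0 :=
      le_of_tendsto_of_tendsto' tendsto_const_nhds hlim hlin
    exact norm_le_zero_iff.mp hle
end

section
/- Let (A,D) be a relative σ-unital pair of C*-algebras. Then (A, D) is relatively Morita equivalent to its relative stabilization (A ⊗ K, D ⊗ C), where K is the compact operators on ℓ²(ℕ) and C is the commutative C*-subalgebra of K generated by the diagonal matrix units. -/
open Filter Finset Topology

/-- `ι` realizes `T` as the C*-tensor product `A ⊗ K` of `A` with the compact operators,
with respect to the matrix units `e i j` of `K`: `ι a i j` represents `a ⊗ e_{i,j}`. -/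
def IsStabilization {A T : Type} [NonUnitalCStarAlgebra A] [NonUnitalCStarAlgebra T]
    (ι : A → ℕ → ℕ → T) : Prop :=
  (∀ a b i j, ι (a + b) i j = ι a i j + ι b i j) ∧
  (∀ (c : ℂ) a i j, ι (c • a) i j = c • ι a i j) ∧
  (∀ a b i j k l, ι a i j * ι b k l = if j = k then ι (a * b) i l else 0) ∧
  (∀ a i j, star (ι a i j) = ι (star a) j i) ∧
  (∀ a i j, ‖ι a i j‖ = ‖a‖) ∧
  (∀ t : T, t ∈ closure
    ((Submodule.span ℂ {t : T | ∃ a i j, t = ι a i j} : Submodule ℂ T) : Set T))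

/-- The C*-subalgebra `D ⊗ C` of `T = A ⊗ K`, where `C ⊆ K` is the subalgebra of
diagonal compact operators. -/
def diagTensor {A T : Type} [NonUnitalCStarAlgebra A] [NonUnitalCStarAlgebra T]
    (ι : A → ℕ → ℕ → T) (D : Set A) : Set T :=
  closure ((Submodule.span ℂ {t : T | ∃ d ∈ D, ∃ n : ℕ, t = ι d n n} : Submodule ℂ T) : Set T)


set_option linter.unusedSectionVars false
set_option maxHeartbeats 1000000

theorem finset_eq_range_card {F : Finset ℕ} (h : ∀ m ∈ F, ∀ l, l < m → l ∈ F) :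
    F = Finset.range F.card := by
  ext x
  simp only [Finset.mem_range]
  constructor
  · intro hx
    have h1 : Finset.range (x + 1) ⊆ F := by
      intro l hl
      rw [Finset.mem_range, Nat.lt_succ_iff] at hl
      rcases hl.lt_or_eq with hl | rfl
      · exact h x hx l hl
      · exact hx
    have := Finset.card_le_card h1
    simpa [Nat.succ_le_iff] using this
  · intro hx
    by_contra hxF
    have h2 : F ⊆ Finset.range x := by
      intro y hy
      rw [Finset.mem_range]
      by_contra hyx
      push_neg at hyx
      rcases eq_or_lt_of_le hyx with rfl | hlt
      · exact hxF hy
      · exact hxF (h y hy x hlt)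
    have := Finset.card_le_card h2
    simp only [Finset.card_range] at this
    omega

/-- Iterated squaring `x ^ (2 ^ n)` in a magma. -/
def sq2 {R : Type*} [Mul R] (x : R) : ℕ → R
  | 0 => x
  | n + 1 => sq2 x n * sq2 x n

lemma IsSelfAdjoint.sq2 {R : Type*} [NonUnitalSemiring R] [StarRing R] {x : R}
    (hx : IsSelfAdjoint x) (n : ℕ) : IsSelfAdjoint (_root_.sq2 x n) := by
  induction n with
  | zero => exact hx
  | succ m ih =>
    show IsSelfAdjoint (_root_.sq2 x m * _root_.sq2 x m)
    rw [IsSelfAdjoint, star_mul, ih.star_eq]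

lemma norm_sq2 {R : Type} [NonUnitalCStarAlgebra R] {x : R} (hx : IsSelfAdjoint x) (n : ℕ) :
    ‖_root_.sq2 x n‖ = ‖x‖ ^ 2 ^ n := by
  induction n with
  | zero => simp [_root_.sq2]
  | succ m ih =>
    show ‖_root_.sq2 x m * _root_.sq2 x m‖ = _
    have h1 : _root_.sq2 x m * _root_.sq2 x m = star (_root_.sq2 x m) * _root_.sq2 x m := by
      rw [(hx.sq2 m).star_eq]
    rw [h1, CStarRing.norm_star_mul_self, ih, pow_succ, pow_mul']
    ring

namespace RMEStab

variable {A T : Type} [NonUnitalCStarAlgebra A] [NonUnitalCStarAlgebra T]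
variable {ι : A → ℕ → ℕ → T} (hι : IsStabilization ι)

section iota
include hι

lemma iota_zero (i j : ℕ) : ι 0 i j = 0 := by
  have := hι.1 0 0 i j
  simpa using this.symm

lemma iota_neg (a : A) (i j : ℕ) : ι (-a) i j = - ι a i j := by
  have := hι.1 a (-a) i j
  rw [add_neg_cancel, iota_zero hι] at this
  exact (neg_eq_of_add_eq_zero_right this.symm).symm

lemma iota_sub (a b : A) (i j : ℕ) : ι (a - b) i j = ι a i j - ι b i j := by
  rw [sub_eq_add_neg, hι.1, iota_neg hι, sub_eq_add_neg]

lemma iota_isometry (i j : ℕ) : Isometry (fun a : A => ι a i j) := by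
  refine Isometry.of_dist_eq fun a b => ?_
  rw [dist_eq_norm, dist_eq_norm]
  show ‖ι a i j - ι b i j‖ = _
  rw [← iota_sub hι, hι.2.2.2.2.1]

lemma iota_injective (i j : ℕ) : Function.Injective (fun a : A => ι a i j) :=
  (iota_isometry hι i j).injective

lemma iota_sum {β : Type*} (s : Finset β) (f : β → A) (i j : ℕ) :
    ι (∑ n ∈ s, f n) i j = ∑ n ∈ s, ι (f n) i j := by
  classical
  induction s using Finset.cons_induction with
  | empty => simpa using iota_zero hι i j
  | cons b s hbs ih => rw [Finset.sum_cons, hι.1, ih, Finset.sum_cons]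

/-- `ψ : A →⋆ₙₐ[ℂ] T`, `a ↦ ι a 0 0`. -/
noncomputable def psiHom : A →⋆ₙₐ[ℂ] T where
  toFun a := ι a 0 0
  map_add' a b := hι.1 a b 0 0
  map_smul' c a := hι.2.1 c a 0 0
  map_zero' := iota_zero hι 0 0
  map_mul' a b := by rw [hι.2.2.1]; simp
  map_star' a := (hι.2.2.2.1 a 0 0).symm

lemma psiHom_apply (a : A) : psiHom hι a = ι a 0 0 := rfl

lemma psiHom_injective : Function.Injective (psiHom hι) := iota_injective hι 0 0

lemma isClosed_range_iota : IsClosed (Set.range fun a : A => ι a 0 0) :=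
  (iota_isometry hι 0 0).isClosedEmbedding.isClosed_range

end iota

/-- Partial inverse of `a ↦ ι a 0 0`. -/
noncomputable def phi (ι : A → ℕ → ℕ → T) (t : T) : A :=
  letI := Classical.propDecidable
  if h : ∃ a, ι a 0 0 = t then h.choose else 0

section phi
include hι

lemma phi_eq {a : A} {t : T} (h : ι a 0 0 = t) : phi ι t = a := by
  have hex : ∃ a, ι a 0 0 = t := ⟨a, h⟩
  have h2 := hex.choose_spec
  have h3 : phi ι t = hex.choose := by
    rw [phi]
    exact dif_pos hex
  rw [h3]
  exact iota_injective hι 0 0 (show ι _ 0 0 = ι _ 0 0 by rw [h2, h])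

lemma phi_iota (a : A) : phi ι (ι a 0 0) = a := phi_eq hι rfl

end phi

/-- A closed set stable under `0`, addition, scalar multiplication containing a generating
set contains the closure of its span. -/
lemma closure_span_subset {E : Type*} [NormedAddCommGroup E] [NormedSpace ℂ E]
    {P : Set E} (hP : IsClosed P) (h0 : (0 : E) ∈ P)
    (haddP : ∀ x ∈ P, ∀ y ∈ P, x + y ∈ P) (hsmulP : ∀ (c : ℂ), ∀ x ∈ P, c • x ∈ P)
    {s : Set E} (hs : s ⊆ P) : closure ((Submodule.span ℂ s : Submodule ℂ E) : Set E) ⊆ P := by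
  refine closure_minimal ?_ hP
  intro x hx
  induction hx using Submodule.span_induction with
  | mem x h => exact hs h
  | zero => exact h0
  | add x y hx hy hx' hy' => exact haddP _ hx' _ hy'
  | smul c x hx hx' => exact hsmulP c _ hx'

/-- The generators of the bimodule `X`: row-zero elements. -/
def genX (ι : A → ℕ → ℕ → T) : Set T := {t : T | ∃ a j, t = ι a 0 j}

/-- The bimodule `X = A ⊗ e₁₁ K` as a closed subspace of `T`. -/
noncomputable def XS (ι : A → ℕ → ℕ → T) : Submodule ℂ T :=
  (Submodule.span ℂ (genX ι)).topologicalClosure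

lemma isClosed_XS : IsClosed ((XS ι : Submodule ℂ T) : Set T) :=
  Submodule.isClosed_topologicalClosure _

lemma XS_coe : ((XS ι : Submodule ℂ T) : Set T)
    = closure ((Submodule.span ℂ (genX ι) : Submodule ℂ T) : Set T) := rfl

lemma mem_XS_gen (a : A) (j : ℕ) : ι a 0 j ∈ XS ι :=
  Submodule.le_topologicalClosure _ (Submodule.subset_span ⟨a, j, rfl⟩)

section Xmem
include hι

lemma gen_mul_mem_XS (a : A) (j : ℕ) (t : T) : ι a 0 j * t ∈ XS ι := by
  have h1 : closure ((Submodule.span ℂ {t : T | ∃ b k l, t = ι b k l} : Submodule ℂ T) : Set T)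
      ⊆ {t : T | ι a 0 j * t ∈ XS ι} := by
    refine closure_span_subset ?_ ?_ ?_ ?_ ?_
    · exact (isClosed_XS (ι := ι)).preimage (continuous_const.mul continuous_id)
    · simp only [Set.mem_setOf_eq, mul_zero]; exact (XS ι).zero_mem
    · intro x hx y hy
      simp only [Set.mem_setOf_eq, mul_add] at *
      exact (XS ι).add_mem hx hy
    · intro c x hx
      simp only [Set.mem_setOf_eq, mul_smul_comm] at *
      exact (XS ι).smul_mem c hx
    · rintro _ ⟨b, k, l, rfl⟩
      simp only [Set.mem_setOf_eq, hι.2.2.1]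
      split
      · exact mem_XS_gen _ _
      · exact (XS ι).zero_mem
  exact h1 (hι.2.2.2.2.2 t)

lemma XS_mul_mem {x : T} (hx : x ∈ XS ι) (t : T) : x * t ∈ XS ι := by
  have h1 : ((XS ι : Submodule ℂ T) : Set T) ⊆ {x : T | x * t ∈ XS ι} := by
    rw [XS_coe]
    refine closure_span_subset ?_ ?_ ?_ ?_ ?_
    · exact (isClosed_XS (ι := ι)).preimage (continuous_id.mul continuous_const)
    · simp only [Set.mem_setOf_eq, zero_mul]; exact (XS ι).zero_mem
    · intro x hx y hy
      simp only [Set.mem_setOf_eq, add_mul] at *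
      exact (XS ι).add_mem hx hy
    · intro c x hx
      simp only [Set.mem_setOf_eq, smul_mul_assoc] at *
      exact (XS ι).smul_mem c hx
    · rintro _ ⟨b, k, rfl⟩
      exact gen_mul_mem_XS hι b k t
  exact h1 hx

lemma corner_mul_XS_mem (a : A) {x : T} (hx : x ∈ XS ι) : ι a 0 0 * x ∈ XS ι := by
  have h1 : ((XS ι : Submodule ℂ T) : Set T) ⊆ {x : T | ι a 0 0 * x ∈ XS ι} := by
    rw [XS_coe]
    refine closure_span_subset ?_ ?_ ?_ ?_ ?_
    · exact (isClosed_XS (ι := ι)).preimage (continuous_const.mul continuous_id)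
    · simp only [Set.mem_setOf_eq, mul_zero]; exact (XS ι).zero_mem
    · intro x hx y hy
      simp only [Set.mem_setOf_eq, mul_add] at *
      exact (XS ι).add_mem hx hy
    · intro c x hx
      simp only [Set.mem_setOf_eq, mul_smul_comm] at *
      exact (XS ι).smul_mem c hx
    · rintro _ ⟨b, k, rfl⟩
      simp only [Set.mem_setOf_eq, hι.2.2.1, if_pos rfl]
      exact mem_XS_gen _ _
  exact h1 hx

lemma XS_mul_star_XS {x y : T} (hx : x ∈ XS ι) (hy : y ∈ XS ι) :
    x * star y ∈ Set.range (fun a : A => ι a 0 0) := by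
  -- first: for fixed x ∈ XS, the set of y with x * star y ∈ range is everything in XS
  have step1 : ∀ (b : A) (k : ℕ), ∀ {y : T}, y ∈ XS ι →
      ι b 0 k * star y ∈ Set.range (fun a : A => ι a 0 0) := by
    intro b k y hy
    have h1 : ((XS ι : Submodule ℂ T) : Set T)
        ⊆ {y : T | ι b 0 k * star y ∈ Set.range (fun a : A => ι a 0 0)} := by
      rw [XS_coe]
      refine closure_span_subset ?_ ?_ ?_ ?_ ?_
      · exact (isClosed_range_iota hι).preimage
          (continuous_const.mul (continuous_star.comp continuous_id))
      · simp only [Set.mem_setOf_eq, star_zero, mul_zero]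
        exact ⟨0, iota_zero hι 0 0⟩
      · rintro x ⟨u, hu⟩ y ⟨v, hv⟩
        simp only [Set.mem_setOf_eq, star_add, mul_add]
        exact ⟨u + v, by show ι (u + v) 0 0 = _; rw [hι.1]; exact congrArg₂ (· + ·) hu hv⟩
      · rintro c x ⟨u, hu⟩
        simp only [Set.mem_setOf_eq, star_smul, mul_smul_comm]
        refine ⟨(starRingEnd ℂ) c • u, ?_⟩
        show ι ((starRingEnd ℂ) c • u) 0 0 = _
        rw [hι.2.1]
        exact congrArg _ hu
      · rintro _ ⟨a, l, rfl⟩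
        simp only [Set.mem_setOf_eq, hι.2.2.2.1, hι.2.2.1]
        split
        · exact ⟨b * star a, rfl⟩
        · exact ⟨0, iota_zero hι 0 0⟩
    exact h1 hy
  have h1 : ((XS ι : Submodule ℂ T) : Set T)
      ⊆ {x : T | x * star y ∈ Set.range (fun a : A => ι a 0 0)} := by
    rw [XS_coe]
    refine closure_span_subset ?_ ?_ ?_ ?_ ?_
    · exact (isClosed_range_iota hι).preimage (continuous_id.mul continuous_const)
    · simp only [Set.mem_setOf_eq, zero_mul]
      exact ⟨0, iota_zero hι 0 0⟩
    · rintro x ⟨u, hu⟩ z ⟨v, hv⟩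
      simp only [Set.mem_setOf_eq, add_mul]
      exact ⟨u + v, by show ι (u + v) 0 0 = _; rw [hι.1]; exact congrArg₂ (· + ·) hu hv⟩
    · rintro c x ⟨u, hu⟩
      simp only [Set.mem_setOf_eq, smul_mul_assoc]
      refine ⟨c • u, ?_⟩
      show ι (c • u) 0 0 = _
      rw [hι.2.1]
      exact congrArg _ hu
    · rintro _ ⟨b, k, rfl⟩
      exact step1 b k hy
  exact h1 hx

end Xmem

/-! ### Pairing combinatorics -/

/-- Fiber of the enumeration over column `i`. -/
def fib (N i : ℕ) : Finset ℕ := (Finset.range N).filter (fun k => (Nat.unpair k).2 = i)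

/-- First components appearing in the fiber. -/
def Eset (N i : ℕ) : Finset ℕ := (fib N i).image (fun k => (Nat.unpair k).1)

/-- Number of terms of column `i` among the first `N`. -/
def cnt (N i : ℕ) : ℕ := (Eset N i).card

lemma mem_Eset {n N i : ℕ} : n ∈ Eset N i ↔ Nat.pair n i < N := by
  constructor
  · intro hn
    obtain ⟨k, hk, rfl⟩ := Finset.mem_image.mp hn
    rw [fib, Finset.mem_filter, Finset.mem_range] at hk
    have : Nat.pair (Nat.unpair k).1 i = k := by
      rw [← hk.2]
      exact Nat.pair_unpair k
    omega
  · intro hn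
    apply Finset.mem_image.mpr
    refine ⟨Nat.pair n i, ?_, by rw [Nat.unpair_pair]⟩
    rw [fib, Finset.mem_filter, Finset.mem_range, Nat.unpair_pair]
    exact ⟨hn, rfl⟩

lemma Eset_eq_range (N i : ℕ) : Eset N i = Finset.range (cnt N i) := by
  apply finset_eq_range_card
  intro m hm l hl
  rw [mem_Eset] at *
  exact lt_trans (Nat.pair_lt_pair_left i hl) hm

lemma tendsto_cnt (i : ℕ) : Tendsto (fun N => cnt N i) atTop atTop := by
  rw [tendsto_atTop]
  intro b
  rw [eventually_atTop]
  refine ⟨Nat.pair b i + 1, fun N hN => ?_⟩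
  have h1 : Finset.range (b + 1) ⊆ Eset N i := by
    intro n hn
    rw [Finset.mem_range, Nat.lt_succ_iff] at hn
    rw [mem_Eset]
    have : Nat.pair n i ≤ Nat.pair b i := by
      rcases hn.lt_or_eq with h | rfl
      · exact le_of_lt (Nat.pair_lt_pair_left i h)
      · exact le_refl _
    omega
  have := Finset.card_le_card h1
  simp only [Finset.card_range] at this
  rw [cnt]
  omega

lemma sum_fib {M : Type*} [AddCommMonoid M] (g : ℕ → M) (N i : ℕ) :
    ∑ k ∈ fib N i, g (Nat.unpair k).1 = ∑ n ∈ Finset.range (cnt N i), g n := by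
  rw [← Eset_eq_range, Eset]
  rw [Finset.sum_image]
  intro x hx y hy hxy
  rw [fib, Finset.mem_coe, Finset.mem_filter] at hx hy
  have hx2 := hx.2
  have hy2 := hy.2
  have : Nat.pair (Nat.unpair x).1 (Nat.unpair x).2 = Nat.pair (Nat.unpair y).1 (Nat.unpair y).2 := by
    rw [hx2, hy2, show (Nat.unpair x).1 = (Nat.unpair y).1 from hxy]
  rwa [Nat.pair_unpair, Nat.pair_unpair] at this

section strict
include hι

lemma SN_mul_gen (c : ℕ → A) (N : ℕ) (b : A) (i j : ℕ) :
    (∑ k ∈ Finset.range N, ι (c (Nat.unpair k).1) (Nat.unpair k).2 (Nat.unpair k).2) * ι b i j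
      = ι ((∑ n ∈ Finset.range (cnt N i), c n) * b) i j := by
  rw [Finset.sum_mul]
  have h1 : ∀ k ∈ Finset.range N,
      ι (c (Nat.unpair k).1) (Nat.unpair k).2 (Nat.unpair k).2 * ι b i j
        = if (Nat.unpair k).2 = i then ι (c (Nat.unpair k).1 * b) i j else 0 := by
    intro k _
    rw [hι.2.2.1]
    by_cases h : (Nat.unpair k).2 = i
    · rw [if_pos h, if_pos h, h]
    · rw [if_neg h, if_neg h]
  rw [Finset.sum_congr rfl h1, Finset.sum_ite, Finset.sum_const_zero, add_zero]
  show ∑ k ∈ fib N i, ι (c (Nat.unpair k).1 * b) i j = _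
  rw [← iota_sum hι, sum_fib (fun n => c n * b), ← Finset.sum_mul]

lemma gen_mul_SN (c : ℕ → A) (N : ℕ) (b : A) (i j : ℕ) :
    ι b i j * (∑ k ∈ Finset.range N, ι (c (Nat.unpair k).1) (Nat.unpair k).2 (Nat.unpair k).2)
      = ι (b * ∑ n ∈ Finset.range (cnt N j), c n) i j := by
  rw [Finset.mul_sum]
  have h1 : ∀ k ∈ Finset.range N,
      ι b i j * ι (c (Nat.unpair k).1) (Nat.unpair k).2 (Nat.unpair k).2
        = if (Nat.unpair k).2 = j then ι (b * c (Nat.unpair k).1) i j else 0 := by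
    intro k _
    rw [hι.2.2.1]
    by_cases h : (Nat.unpair k).2 = j
    · rw [if_pos h.symm, if_pos h, h]
    · rw [if_neg (Ne.symm h), if_neg h]
  rw [Finset.sum_congr rfl h1, Finset.sum_ite, Finset.sum_const_zero, add_zero]
  show ∑ k ∈ fib N j, ι (b * c (Nat.unpair k).1) i j = _
  rw [← iota_sum hι, sum_fib (fun n => b * c n), ← Finset.mul_sum]

/-- Norm of an orthogonal diagonal sum is bounded by the max of the norms. -/
lemma norm_diag_sum_le {C : ℝ} (hC : 0 ≤ C) (I : Finset ℕ) (w : ℕ → A)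
    (hsa : ∀ i, IsSelfAdjoint (w i)) (hw : ∀ i ∈ I, ‖w i‖ ≤ C) :
    ‖∑ i ∈ I, ι (w i) i i‖ ≤ C := by
  classical
  set s := ∑ i ∈ I, ι (w i) i i with hs
  have hpow : ∀ p : ℕ, sq2 s p = ∑ i ∈ I, ι (sq2 (w i) p) i i := by
    intro p
    induction p with
    | zero => rfl
    | succ q ih =>
      show sq2 s q * sq2 s q = _
      rw [ih, Finset.sum_mul_sum]
      calc ∑ i ∈ I, ∑ i' ∈ I, ι (sq2 (w i) q) i i * ι (sq2 (w i') q) i' i'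
          = ∑ i ∈ I, ∑ i' ∈ I, (if i = i' then ι (sq2 (w i) q * sq2 (w i') q) i i' else 0) :=
            Finset.sum_congr rfl fun i _ => Finset.sum_congr rfl fun i' _ => hι.2.2.1 _ _ _ _ _ _
        _ = ∑ i ∈ I, ι (sq2 (w i) q * sq2 (w i) q) i i := by
            refine Finset.sum_congr rfl fun i hi => ?_
            rw [Finset.sum_ite_eq, if_pos hi]
        _ = ∑ i ∈ I, ι (sq2 (w i) (q + 1)) i i := rfl
  have hsa_s : IsSelfAdjoint s := by
    rw [hs, IsSelfAdjoint, star_sum]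
    refine Finset.sum_congr rfl fun i _ => ?_
    rw [hι.2.2.2.1, (hsa i).star_eq]
  have hnormpow : ∀ p : ℕ, ‖s‖ ^ 2 ^ p ≤ (I.card : ℝ) * C ^ 2 ^ p := by
    intro p
    rw [← norm_sq2 hsa_s p, hpow p]
    calc ‖∑ i ∈ I, ι (sq2 (w i) p) i i‖
        ≤ ∑ i ∈ I, ‖ι (sq2 (w i) p) i i‖ := norm_sum_le _ _
      _ ≤ ∑ i ∈ I, C ^ 2 ^ p := by
          refine Finset.sum_le_sum fun i hi => ?_
          rw [hι.2.2.2.2.1, norm_sq2 (hsa i) p]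
          exact pow_le_pow_left₀ (norm_nonneg _) (hw i hi) _
      _ = (I.card : ℝ) * C ^ 2 ^ p := by rw [Finset.sum_const, nsmul_eq_mul]
  by_contra hlt
  push_neg at hlt
  have hspos : 0 < ‖s‖ := lt_of_le_of_lt hC hlt
  rcases eq_or_lt_of_le hC with hC0 | hCpos
  · have h0 := hnormpow 0
    rw [pow_zero, pow_one, pow_one, ← hC0, mul_zero] at h0
    linarith
  set r := ‖s‖ / C with hr
  have hr1 : 1 < r := (one_lt_div hCpos).mpr hlt
  have hbound : ∀ p : ℕ, r ^ 2 ^ p ≤ (I.card : ℝ) := by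
    intro p
    rw [hr, div_pow, div_le_iff₀ (by positivity)]
    exact hnormpow p
  have htend : Tendsto (fun p : ℕ => r ^ 2 ^ p) atTop atTop :=
    (tendsto_pow_atTop_atTop_of_one_lt hr1).comp (tendsto_pow_atTop_atTop_of_one_lt (α := ℕ) one_lt_two)
  obtain ⟨p, hp⟩ := (htend.eventually_gt_atTop (I.card : ℝ)).exists
  exact absurd (hbound p) (not_le.mpr hp)

lemma norm_SN_le {C : ℝ} (c : ℕ → A) (hsa : ∀ n, IsSelfAdjoint (c n))
    (hCM : ∀ M, ‖∑ n ∈ Finset.range M, c n‖ ≤ C) (hC : 0 ≤ C) (N : ℕ) :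
    ‖∑ k ∈ Finset.range N, ι (c (Nat.unpair k).1) (Nat.unpair k).2 (Nat.unpair k).2‖ ≤ C := by
  classical
  have heq : ∀ k ∈ Finset.range N,
      (fun i => ι (∑ n ∈ Finset.range (cnt N i), c n) i i) ((Nat.unpair k).2)
        = ∑ j ∈ (Finset.range N).filter (fun j => (Nat.unpair j).2 = (Nat.unpair k).2),
            ι (c (Nat.unpair j).1) (Nat.unpair j).2 (Nat.unpair j).2 := by
    intro k _
    show ι (∑ n ∈ Finset.range (cnt N (Nat.unpair k).2), c n) (Nat.unpair k).2 (Nat.unpair k).2 = _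
    rw [iota_sum hι, ← sum_fib (fun n => ι (c n) (Nat.unpair k).2 (Nat.unpair k).2)]
    refine Finset.sum_congr rfl fun k' hk' => ?_
    rw [(Finset.mem_filter.mp hk').2]
  have hgroup := (Finset.sum_image'
    (f := fun i => ι (∑ n ∈ Finset.range (cnt N i), c n) i i)
    (g := fun k => (Nat.unpair k).2)
    (fun k => ι (c (Nat.unpair k).1) (Nat.unpair k).2 (Nat.unpair k).2) heq).symm
  rw [hgroup]
  refine norm_diag_sum_le hι hC _ _ (fun i => ?_) (fun i _ => hCM _)
  rw [IsSelfAdjoint, star_sum]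
  exact Finset.sum_congr rfl fun n _ => (hsa n).star_eq


end strict

lemma exists_bound (c : ℕ → A)
    (h : ∀ b : A, Tendsto (fun M => (∑ n ∈ Finset.range M, c n) * b) atTop (𝓝 b)) :
    ∃ C : ℝ, 0 ≤ C ∧ ∀ M, ‖∑ n ∈ Finset.range M, c n‖ ≤ C := by
  set g : ℕ → A →L[ℂ] A := fun M => ContinuousLinearMap.mul ℂ A (∑ n ∈ Finset.range M, c n)
    with hg
  have hb : ∀ b : A, ∃ Cb, ∀ M, ‖g M b‖ ≤ Cb := by
    intro b
    have h1 : Tendsto (fun M => ‖(∑ n ∈ Finset.range M, c n) * b‖) atTop (𝓝 ‖b‖) := (h b).norm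
    obtain ⟨Cb, hCb⟩ := h1.bddAbove_range
    exact ⟨Cb, fun M => hCb ⟨M, rfl⟩⟩
  obtain ⟨C', hC'⟩ := banach_steinhaus hb
  refine ⟨max C' 0, le_max_right _ _, fun M => ?_⟩
  set u := ∑ n ∈ Finset.range M, c n with hu
  rcases eq_or_lt_of_le (norm_nonneg u) with h0 | h0
  · rw [← h0]; exact le_max_right _ _
  have h1 : ‖u‖ * ‖u‖ = ‖u * star u‖ := (CStarRing.norm_self_mul_star).symm
  have h2 : u * star u = g M (star u) := rfl
  have h3 : ‖g M (star u)‖ ≤ ‖g M‖ * ‖star u‖ := (g M).le_opNorm _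
  rw [norm_star] at h3
  have h4 : ‖u‖ * ‖u‖ ≤ ‖g M‖ * ‖u‖ := by rw [h1, h2]; exact h3
  have h5 : ‖u‖ ≤ ‖g M‖ := le_of_mul_le_mul_right (by linarith [h4]) h0
  exact le_trans h5 (le_trans (hC' M) (le_max_left _ _))

lemma tendsto_mul_left_of_bdd {S : ℕ → T} {C : ℝ} (hS : ∀ N, ‖S N‖ ≤ C) {t : T}
    (ht : t ∈ closure {u : T | Tendsto (fun N => S N * u) atTop (𝓝 u)}) :
    Tendsto (fun N => S N * t) atTop (𝓝 t) := by
  have hC : 0 ≤ C := le_trans (norm_nonneg _) (hS 0)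
  rw [Metric.tendsto_atTop]
  intro ε hε
  have hδ : 0 < ε / (2 * (C + 1)) := by positivity
  obtain ⟨u, hu, hud⟩ := Metric.mem_closure_iff.mp ht _ hδ
  rw [Set.mem_setOf_eq, Metric.tendsto_atTop] at hu
  obtain ⟨N₀, hN₀⟩ := hu (ε / 2) (by positivity)
  refine ⟨N₀, fun N hN => ?_⟩
  have h1 : dist (S N * t) t ≤ dist (S N * t) (S N * u) + dist (S N * u) u + dist u t :=
    dist_triangle4 _ _ _ _
  have h2 : dist (S N * t) (S N * u) ≤ C * dist t u := by
    rw [dist_eq_norm, ← mul_sub, dist_eq_norm t u]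
    calc ‖S N * (t - u)‖ ≤ ‖S N‖ * ‖t - u‖ := norm_mul_le _ _
      _ ≤ C * ‖t - u‖ := mul_le_mul_of_nonneg_right (hS N) (norm_nonneg _)
  have h3 : C * dist t u + dist u t < ε / 2 := by
    rw [dist_comm u t]
    have : (C + 1) * dist t u < (C + 1) * (ε / (2 * (C + 1))) :=
      mul_lt_mul_of_pos_left hud (by linarith)
    have he : (C + 1) * (ε / (2 * (C + 1))) = ε / 2 := by
      field_simp
    nlinarith [dist_nonneg (x := t) (y := u)]
  have h4 := hN₀ N hN
  calc dist (S N * t) t ≤ C * dist t u + dist (S N * u) u + dist u t := by linarith [h1, h2]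
    _ < ε := by linarith [h3, h4]

lemma tendsto_mul_right_of_bdd {S : ℕ → T} {C : ℝ} (hS : ∀ N, ‖S N‖ ≤ C) {t : T}
    (ht : t ∈ closure {u : T | Tendsto (fun N => u * S N) atTop (𝓝 u)}) :
    Tendsto (fun N => t * S N) atTop (𝓝 t) := by
  have hC : 0 ≤ C := le_trans (norm_nonneg _) (hS 0)
  rw [Metric.tendsto_atTop]
  intro ε hε
  have hδ : 0 < ε / (2 * (C + 1)) := by positivity
  obtain ⟨u, hu, hud⟩ := Metric.mem_closure_iff.mp ht _ hδ
  rw [Set.mem_setOf_eq, Metric.tendsto_atTop] at hu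
  obtain ⟨N₀, hN₀⟩ := hu (ε / 2) (by positivity)
  refine ⟨N₀, fun N hN => ?_⟩
  have h1 : dist (t * S N) t ≤ dist (t * S N) (u * S N) + dist (u * S N) u + dist u t :=
    dist_triangle4 _ _ _ _
  have h2 : dist (t * S N) (u * S N) ≤ C * dist t u := by
    rw [dist_eq_norm, ← sub_mul, dist_eq_norm t u]
    calc ‖(t - u) * S N‖ ≤ ‖t - u‖ * ‖S N‖ := norm_mul_le _ _
      _ ≤ ‖t - u‖ * C := mul_le_mul_of_nonneg_left (hS N) (norm_nonneg _)
      _ = C * ‖t - u‖ := mul_comm _ _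
  have h3 : C * dist t u + dist u t < ε / 2 := by
    rw [dist_comm u t]
    have : (C + 1) * dist t u < (C + 1) * (ε / (2 * (C + 1))) :=
      mul_lt_mul_of_pos_left hud (by linarith)
    have he : (C + 1) * (ε / (2 * (C + 1))) = ε / 2 := by
      field_simp
    nlinarith [dist_nonneg (x := t) (y := u)]
  have h4 := hN₀ N hN
  calc dist (t * S N) t ≤ C * dist t u + dist (u * S N) u + dist u t := by linarith [h1, h2]
    _ < ε := by linarith [h3, h4]

section transfer
include hι

/-- The key analytic lemma: a relative approximate-unit strict sum in `A` transfers to the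
diagonal family in `T = A ⊗ K`. -/
lemma strict_transfer (c : ℕ → A) (hsa : ∀ n, IsSelfAdjoint (c n))
    (hc : StrictPartialSumOne c) :
    StrictPartialSumOne
      (fun k : ℕ => ι (c (Nat.unpair k).1) (Nat.unpair k).2 (Nat.unpair k).2) := by
  obtain ⟨C, hC0, hC⟩ := exists_bound c hc.1
  set S : ℕ → T :=
    fun N => ∑ k ∈ Finset.range N, ι (c (Nat.unpair k).1) (Nat.unpair k).2 (Nat.unpair k).2
    with hSdef
  have hSnorm : ∀ N, ‖S N‖ ≤ C := fun N => norm_SN_le hι c hsa hC hC0 N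
  have hgenL : ∀ b i j, Tendsto (fun N => S N * ι b i j) atTop (𝓝 (ι b i j)) := by
    intro b i j
    have h1 : Tendsto (fun M => ι ((∑ n ∈ Finset.range M, c n) * b) i j) atTop (𝓝 (ι b i j)) := by
      have hcont : Continuous (fun a : A => ι a i j) := (iota_isometry hι i j).continuous
      have := (hcont.tendsto b).comp (hc.1 b)
      simpa [Function.comp_def] using this
    have h2 := h1.comp (tendsto_cnt i)
    refine h2.congr fun N => ?_
    show ι ((∑ n ∈ Finset.range (cnt N i), c n) * b) i j = S N * ι b i j
    exact (SN_mul_gen hι c N b i j).symm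
  have hgenR : ∀ b i j, Tendsto (fun N => ι b i j * S N) atTop (𝓝 (ι b i j)) := by
    intro b i j
    have h1 : Tendsto (fun M => ι (b * ∑ n ∈ Finset.range M, c n) i j) atTop (𝓝 (ι b i j)) := by
      have hcont : Continuous (fun a : A => ι a i j) := (iota_isometry hι i j).continuous
      have := (hcont.tendsto b).comp (hc.2 b)
      simpa [Function.comp_def] using this
    have h2 := h1.comp (tendsto_cnt j)
    refine h2.congr fun N => ?_
    exact (gen_mul_SN hι c N b i j).symm
  constructor
  · intro t
    have hset : ((Submodule.span ℂ {t : T | ∃ a i j, t = ι a i j} : Submodule ℂ T) : Set T)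
        ⊆ {u : T | Tendsto (fun N => S N * u) atTop (𝓝 u)} := by
      intro x hx
      induction hx using Submodule.span_induction with
      | mem x h =>
        obtain ⟨a, i, j, rfl⟩ := h
        exact hgenL a i j
      | zero =>
        simp only [Set.mem_setOf_eq, mul_zero]
        exact tendsto_const_nhds
      | add x y hx hy hx' hy' =>
        simp only [Set.mem_setOf_eq, mul_add] at *
        exact hx'.add hy'
      | smul c x hx hx' =>
        simp only [Set.mem_setOf_eq, mul_smul_comm] at *
        exact hx'.const_smul c
    exact tendsto_mul_left_of_bdd hSnorm (closure_mono hset (hι.2.2.2.2.2 t))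
  · intro t
    have hset : ((Submodule.span ℂ {t : T | ∃ a i j, t = ι a i j} : Submodule ℂ T) : Set T)
        ⊆ {u : T | Tendsto (fun N => u * S N) atTop (𝓝 u)} := by
      intro x hx
      induction hx using Submodule.span_induction with
      | mem x h =>
        obtain ⟨a, i, j, rfl⟩ := h
        exact hgenR a i j
      | zero =>
        simp only [Set.mem_setOf_eq, zero_mul]
        exact tendsto_const_nhds
      | add x y hx hy hx' hy' =>
        simp only [Set.mem_setOf_eq, add_mul] at *
        exact hx'.add hy'
      | smul c x hx hx' =>
        simp only [Set.mem_setOf_eq, smul_mul_assoc] at *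
        exact hx'.const_smul c
    exact tendsto_mul_right_of_bdd hSnorm (closure_mono hset (hι.2.2.2.2.2 t))

end transfer

section pos
include hι

/-- Positivity reflection: if `ι l 0 0 = star s * s` and `l` is selfadjoint,
then `l` is a positive element of `A`. -/
lemma exists_star_mul_self {l : A} (hsa : IsSelfAdjoint l) {s : T}
    (h : ι l 0 0 = star s * s) : ∃ b : A, l = star b * b := by
  set Ψ : Unitization ℂ A →⋆ₐ[ℂ] Unitization ℂ T := Unitization.starMap (psiHom hι) with hΨ
  have hΨinj : Function.Injective Ψ := Unitization.starMap_injective (psiHom_injective hι)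
  have hsa' : IsSelfAdjoint ((l : Unitization ℂ A)) := by
    rw [IsSelfAdjoint, ← Unitization.inr_star, hsa.star_eq]
  have hspec := hsa'.map_spectrum_real Ψ hΨinj
  have hΨl : Ψ ((l : Unitization ℂ A))
      = star ((s : Unitization ℂ T)) * (s : Unitization ℂ T) := by
    rw [hΨ, Unitization.starMap_inr]
    show ((psiHom hι l : T) : Unitization ℂ T) = _
    rw [psiHom_apply, h, Unitization.inr_mul, Unitization.inr_star]
  have hnn : ∀ x ∈ spectrum ℝ ((l : Unitization ℂ A)), 0 ≤ x := by
    rw [← hspec, hΨl]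
    exact spectrum_star_mul_self_nonneg
  have hqr : QuasispectrumRestricts l ContinuousMap.realToNNReal := by
    rw [QuasispectrumRestricts.nnreal_iff]
    intro x hx
    rw [Unitization.quasispectrum_eq_spectrum_inr' ℝ ℂ] at hx
    exact hnn x hx
  obtain ⟨b, hb_sa, -, hbb⟩ :=
    CFC.exists_sqrt_of_isSelfAdjoint_of_quasispectrumRestricts hsa hqr
  exact ⟨b, by rw [← hbb, hb_sa.star_eq]⟩

end pos
end RMEStab


namespace RMEStab

variable {A T : Type} [NonUnitalCStarAlgebra A] [NonUnitalCStarAlgebra T]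
variable {ι : A → ℕ → ℕ → T}

section J
variable (hι : IsStabilization ι) (e : ℕ → A)
  (heL : ∀ a : A, Tendsto (fun n => e n * a) atTop (𝓝 a))

lemma iota_linner (hι : IsStabilization ι) (x y : ↥(XS ι)) :
    ι (phi ι ((x : T) * star (y : T))) 0 0 = (x : T) * star (y : T) := by
  obtain ⟨a, ha⟩ := XS_mul_star_XS hι x.2 y.2
  rw [phi_eq hι ha]
  exact ha

lemma iota_mul_corner (hι : IsStabilization ι) (a b : A) :
    ι a 0 0 * ι b 0 0 = ι (a * b) 0 0 := by
  rw [hι.2.2.1]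
  simp

/-- The imprimitivity bimodule structure on `X`. -/
noncomputable def J : ImprimitivityBimodule A T ↥(XS ι) where
  lsmul a x := ⟨ι a 0 0 * (x : T), corner_mul_XS_mem hι a x.2⟩
  rsmul x t := ⟨(x : T) * t, XS_mul_mem hι x.2 t⟩
  linner x y := phi ι ((x : T) * star (y : T))
  rinner x y := star (x : T) * (y : T)
  lsmul_add a x y := Subtype.ext (by simp [mul_add])
  add_lsmul a b x := Subtype.ext (by simp [hι.1, add_mul])
  mul_lsmul a b x := Subtype.ext (by simp [← iota_mul_corner hι, mul_assoc])
  lsmul_smulc c a x := Subtype.ext (by simp [hι.2.1, smul_mul_assoc])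
  rsmul_add x y b := Subtype.ext (by simp [add_mul])
  add_rsmul x a b := Subtype.ext (by simp [mul_add])
  rsmul_mul x a b := Subtype.ext (by simp [mul_assoc])
  rsmul_smulc c x b := Subtype.ext (by simp [mul_smul_comm])
  lsmul_rsmul a x b := Subtype.ext (by simp [mul_assoc])
  linner_add_left x y z := by
    refine phi_eq hι ?_
    rw [hι.1, iota_linner hι x z, iota_linner hι y z]
    simp [add_mul]
  linner_star x y := by
    refine (phi_eq hι ?_).symm
    rw [← hι.2.2.2.1, iota_linner hι x y]
    simp [star_mul]
  linner_lsmul_left a x y := by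
    refine phi_eq hι ?_
    rw [← iota_mul_corner hι, iota_linner hι x y]
    show ι a 0 0 * ((x : T) * star (y : T)) = ι a 0 0 * (x : T) * star (y : T)
    rw [mul_assoc]
  linner_smul_left c x y := by
    refine phi_eq hι ?_
    rw [hι.2.1, iota_linner hι x y]
    simp [smul_mul_assoc]
  rinner_add_right x y z := by simp [mul_add]
  rinner_star x y := by simp [star_mul]
  rinner_rsmul_right x y b := by
    show star (x : T) * ((y : T) * b) = star (x : T) * (y : T) * b
    rw [mul_assoc]
  rinner_smul_right c x y := by simp [mul_smul_comm]
  linner_self_pos x := by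
    have hsa : IsSelfAdjoint (phi ι ((x : T) * star (x : T))) := by
      apply iota_injective hι 0 0
      show ι _ 0 0 = ι _ 0 0
      rw [← hι.2.2.2.1, iota_linner hι x x]
      simp [star_mul, mul_assoc]
    refine exists_star_mul_self hι hsa (s := star (x : T)) ?_
    rw [iota_linner hι x x, star_star]
  rinner_self_pos x := ⟨(x : T), rfl⟩
  imprim x y z := by
    refine Subtype.ext ?_
    show ι (phi ι ((x : T) * star (y : T))) 0 0 * (z : T) = (x : T) * (star (y : T) * (z : T))
    rw [iota_linner hι x y, mul_assoc]
  norm_linner_self x := by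
    have h1 : ‖phi ι ((x : T) * star (x : T))‖ = ‖ι (phi ι ((x : T) * star (x : T))) 0 0‖ :=
      (hι.2.2.2.2.1 _ 0 0).symm
    rw [h1, iota_linner hι x x, CStarRing.norm_self_mul_star, sq]
    rfl
  norm_rinner_self x := by
    rw [CStarRing.norm_star_mul_self, sq]
    rfl
  full_left a := by
    have hmem : ∀ n : ℕ, e n * a ∈
        {c : A | ∃ x y : ↥(XS ι), c = phi ι ((x : T) * star (y : T))} := by
      intro n
      refine ⟨⟨ι (e n) 0 0, mem_XS_gen _ _⟩, ⟨ι (star a) 0 0, mem_XS_gen _ _⟩, ?_⟩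
      show e n * a = phi ι (ι (e n) 0 0 * star (ι (star a) 0 0))
      rw [hι.2.2.2.1, star_star, iota_mul_corner hι, phi_iota hι]
    refine mem_closure_of_tendsto (heL a) ?_
    filter_upwards with n
    exact Submodule.subset_span (hmem n)
  full_right t := by
    have hgen : ∀ (b : A) (i j : ℕ), ι b i j ∈
        closure {c : T | ∃ x y : ↥(XS ι), c = star (x : T) * (y : T)} := by
      intro b i j
      have htend : Tendsto (fun n => ι (e n * b) i j) atTop (𝓝 (ι b i j)) := by
        have hcont : Continuous (fun a : A => ι a i j) := (iota_isometry hι i j).continuous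
        have := (hcont.tendsto b).comp (heL b)
        simpa [Function.comp_def] using this
      refine mem_closure_of_tendsto htend ?_
      filter_upwards with n
      refine ⟨⟨ι (star (e n)) 0 i, mem_XS_gen _ _⟩, ⟨ι b 0 j, mem_XS_gen _ _⟩, ?_⟩
      show ι (e n * b) i j = star (ι (star (e n)) 0 i) * ι b 0 j
      rw [hι.2.2.2.1, star_star, hι.2.2.1, if_pos rfl]
    set P := (Submodule.span ℂ {c : T | ∃ x y : ↥(XS ι), c = star (x : T) * (y : T)}
      ).topologicalClosure with hP
    have hsub : {t : T | ∃ a i j, t = ι a i j} ⊆ (P : Set T) := by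
      rintro _ ⟨b, i, j, rfl⟩
      have h1 : closure {c : T | ∃ x y : ↥(XS ι), c = star (x : T) * (y : T)} ⊆ (P : Set T) := by
        rw [hP, Submodule.topologicalClosure_coe]
        exact closure_mono Submodule.subset_span
      exact h1 (hgen b i j)
    have h2 : closure ((Submodule.span ℂ {t : T | ∃ a i j, t = ι a i j} : Submodule ℂ T) : Set T)
        ⊆ (P : Set T) := by
      refine closure_span_subset (Submodule.isClosed_topologicalClosure _) (P.zero_mem)
        (fun x hx y hy => P.add_mem hx hy) (fun c x hx => P.smul_mem c hx) hsub
    have h3 := h2 (hι.2.2.2.2.2 t)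
    rwa [hP, Submodule.topologicalClosure_coe] at h3

end J
end RMEStab


namespace RMEStab
variable {A T : Type} [NonUnitalCStarAlgebra A] [NonUnitalCStarAlgebra T]
variable {ι : A → ℕ → ℕ → T}

section basis
variable (hι : IsStabilization ι) {D : Set A} (hD : IsCStarSubalgebra D)

include hι hD in
lemma diag_conj_mem_image {u v : A} {m m' : ℕ}
    (hcond : ∀ d ∈ D, u * d * star v ∈ D) {t : T} (ht : t ∈ diagTensor ι D) :
    ι u 0 m * t * star (ι v 0 m') ∈ (fun d : A => ι d 0 0) '' D := by
  have himcl : IsClosed ((fun d : A => ι d 0 0) '' D) :=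
    (iota_isometry hι 0 0).isClosedEmbedding.isClosedMap _ hD.1
  have hP : diagTensor ι D ⊆
      {t : T | ι u 0 m * t * star (ι v 0 m') ∈ (fun d : A => ι d 0 0) '' D} := by
    refine closure_span_subset ?_ ?_ ?_ ?_ ?_
    · exact himcl.preimage (by continuity)
    · simp only [Set.mem_setOf_eq, mul_zero, zero_mul]
      exact ⟨0, hD.2.1, iota_zero hι 0 0⟩
    · rintro x ⟨d, hd, hde⟩ y ⟨d', hd', hde'⟩
      simp only [Set.mem_setOf_eq, mul_add, add_mul]
      refine ⟨d + d', hD.2.2.1 d hd d' hd', ?_⟩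
      show ι (d + d') 0 0 = _
      rw [hι.1]
      exact congrArg₂ (· + ·) hde hde'
    · rintro c x ⟨d, hd, hde⟩
      simp only [Set.mem_setOf_eq, mul_smul_comm, smul_mul_assoc]
      refine ⟨c • d, hD.2.2.2.2.1 c d hd, ?_⟩
      show ι (c • d) 0 0 = _
      rw [hι.2.1]
      exact congrArg _ hde
    · rintro _ ⟨d, hd, p, rfl⟩
      simp only [Set.mem_setOf_eq, hι.2.2.2.1]
      rw [hι.2.2.1]
      by_cases h1 : m = p
      · rw [if_pos h1, hι.2.2.1]
        by_cases h2 : p = m'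
        · rw [if_pos h2]
          exact ⟨u * d * star v, hcond d hd, rfl⟩
        · rw [if_neg h2]
          exact ⟨0, hD.2.1, iota_zero hι 0 0⟩
      · rw [if_neg h1, zero_mul]
        exact ⟨0, hD.2.1, iota_zero hι 0 0⟩
  exact hP ht

include hι hD in
lemma diag_conj_eq_zero {u v : A} {m m' : ℕ}
    (hcond : m = m' → ∀ d ∈ D, u * d * star v = 0) {t : T} (ht : t ∈ diagTensor ι D) :
    ι u 0 m * t * star (ι v 0 m') = 0 := by
  have hP : diagTensor ι D ⊆ {t : T | ι u 0 m * t * star (ι v 0 m') = 0} := by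
    refine closure_span_subset ?_ ?_ ?_ ?_ ?_
    · exact (isClosed_singleton (x := (0 : T))).preimage (by continuity)
    · simp
    · intro x hx y hy
      simp only [Set.mem_setOf_eq] at *
      rw [mul_add, add_mul, hx, hy, add_zero]
    · intro c x hx
      simp only [Set.mem_setOf_eq] at *
      rw [mul_smul_comm, smul_mul_assoc, hx, smul_zero]
    · rintro _ ⟨d, hd, p, rfl⟩
      simp only [Set.mem_setOf_eq, hι.2.2.2.1]
      rw [hι.2.2.1]
      by_cases h1 : m = p
      · rw [if_pos h1, hι.2.2.1]
        by_cases h2 : p = m'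
        · rw [if_pos h2, hcond (h1.trans h2) d hd, iota_zero hι]
        · rw [if_neg h2]
      · rw [if_neg h1, zero_mul]
  exact hP ht

variable (e : ℕ → A) (heL : ∀ a : A, Tendsto (fun n => e n * a) atTop (𝓝 a))

include hι hD in
lemma memXD_gen {u : A} (m : ℕ)
    (h1 : ∀ d ∈ D, u * d * star u ∈ D) (h2 : ∀ d ∈ D, star u * d * u ∈ D) :
    (J hι e heL).memXD D (diagTensor ι D) ⟨ι u 0 m, mem_XS_gen u m⟩ := by
  constructor
  · intro d₂ hd₂
    show phi ι (ι u 0 m * d₂ * star (ι u 0 m)) ∈ D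
    obtain ⟨d, hd, hde⟩ := diag_conj_mem_image hι hD h1 hd₂ (m' := m)
    rw [← hde, phi_iota hι]
    exact hd
  · intro d₁ hd₁
    show star (ι u 0 m) * (ι d₁ 0 0 * ι u 0 m) ∈ diagTensor ι D
    rw [hι.2.2.2.1, hι.2.2.1, if_pos rfl, hι.2.2.1, if_pos rfl, ← mul_assoc]
    exact subset_closure (Submodule.subset_span ⟨star u * d₁ * u, h2 d₁ hd₁, m, rfl⟩)

variable {a : ℕ → A} (ha : IsRelApproxUnit D a)

include hι hD ha in
lemma isRelLeftBasis : (J hι e heL).IsRelLeftBasis D (diagTensor ι D)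
    (fun k => ⟨ι (a (Nat.unpair k).1) 0 (Nat.unpair k).2,
      mem_XS_gen (a (Nat.unpair k).1) (Nat.unpair k).2⟩) := by
  refine ⟨fun k => ?_, ?_, ?_⟩
  · exact memXD_gen hι hD e heL (Nat.unpair k).2
      (fun d hd => (ha.1 (Nat.unpair k).1 d hd).2) (fun d hd => (ha.1 (Nat.unpair k).1 d hd).1)
  · have hfun : (fun k : ℕ => (J hι e heL).rinner
        ⟨ι (a (Nat.unpair k).1) 0 (Nat.unpair k).2, mem_XS_gen _ _⟩
        ⟨ι (a (Nat.unpair k).1) 0 (Nat.unpair k).2, mem_XS_gen _ _⟩)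
        = fun k : ℕ => ι (star (a (Nat.unpair k).1) * a (Nat.unpair k).1)
            (Nat.unpair k).2 (Nat.unpair k).2 := by
      funext k
      show star (ι (a (Nat.unpair k).1) 0 (Nat.unpair k).2) * ι (a (Nat.unpair k).1) 0 (Nat.unpair k).2 = _
      rw [hι.2.2.2.1, hι.2.2.1, if_pos rfl]
    rw [hfun]
    exact strict_transfer hι (fun n => star (a n) * a n)
      (fun n => IsSelfAdjoint.star_mul_self (a n)) ha.2.1
  · intro d₂ hd₂ k k' hkk'
    show phi ι ((ι (a (Nat.unpair k).1) 0 (Nat.unpair k).2 * d₂)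
      * star (ι (a (Nat.unpair k').1) 0 (Nat.unpair k').2)) = 0
    have h0 : ι (a (Nat.unpair k).1) 0 (Nat.unpair k).2 * d₂
        * star (ι (a (Nat.unpair k').1) 0 (Nat.unpair k').2) = 0 := by
      refine diag_conj_eq_zero hι hD ?_ hd₂
      intro hm d hd
      have hnn : (Nat.unpair k).1 ≠ (Nat.unpair k').1 := by
        intro hn
        apply hkk'
        have := congrArg₂ Nat.pair hn hm
        rwa [Nat.pair_unpair, Nat.pair_unpair] at this
      exact ha.2.2 d hd _ _ hnn
    rw [h0, ← iota_zero hι 0 0, phi_iota hι]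

include hι hD ha in
lemma isRelRightBasis : (J hι e heL).IsRelRightBasis D (diagTensor ι D)
    (fun n => ⟨ι (star (a n)) 0 0, mem_XS_gen (star (a n)) 0⟩) := by
  refine ⟨fun n => ?_, ?_, ?_⟩
  · refine memXD_gen hι hD e heL 0 (fun d hd => ?_) (fun d hd => ?_)
    · rw [star_star]
      exact (ha.1 n d hd).1
    · rw [star_star]
      exact (ha.1 n d hd).2
  · have hfun : (fun n : ℕ => (J hι e heL).linner
        ⟨ι (star (a n)) 0 0, mem_XS_gen _ _⟩ ⟨ι (star (a n)) 0 0, mem_XS_gen _ _⟩)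
        = fun n : ℕ => star (a n) * a n := by
      funext n
      show phi ι (ι (star (a n)) 0 0 * star (ι (star (a n)) 0 0)) = _
      rw [hι.2.2.2.1, star_star, hι.2.2.1, if_pos rfl, phi_iota hι]
    rw [hfun]
    exact ha.2.1
  · intro d₁ hd₁ n m hnm
    show star (ι (star (a n)) 0 0) * (ι d₁ 0 0 * ι (star (a m)) 0 0) = 0
    rw [hι.2.2.2.1, star_star, hι.2.2.1, if_pos rfl, hι.2.2.1, if_pos rfl, ← mul_assoc,
      ha.2.2 d₁ hd₁ n m hnm, iota_zero hι]

end basis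
end RMEStab
/-- A relative σ-unital pair `(A, D)` is relatively Morita equivalent to its relative
stabilization `(A ⊗ K, D ⊗ C)`. -/
theorem rme_stabilization
    {A T : Type} [NonUnitalCStarAlgebra A] [NonUnitalCStarAlgebra T]
    (D : Set A) (hAD : RelSigmaUnital A D)
    (ι : A → ℕ → ℕ → T) (hι : IsStabilization ι) :
    RME A D T (diagTensor ι D) := by
  obtain ⟨hD, ⟨e, _, heL, _⟩, ⟨a, ha⟩⟩ := hAD
  exact ⟨{ X := ↥(RMEStab.XS ι)
           J := RMEStab.J hι e heL
           rel := ⟨⟨_, RMEStab.isRelLeftBasis hι hD e heL ha⟩,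
                   ⟨_, RMEStab.isRelRightBasis hι hD e heL ha⟩⟩ }⟩
end

section
/- If (A,D) is a relative σ-unital pair of C*-algebras, then the relative stabilization (A ⊗ K, D ⊗ C) is also relative σ-unital: if {d_n} is an orthogonal approximate unit for (A,D), then { d_n ⊗ e_{m,m} }_{n,m ∈ ℕ} is an orthogonal approximate unit for (A⊗K, D⊗C). -/
open Filter Finset Topology

lemma proj_norm_le_one {T : Type} [NonUnitalCStarAlgebra T] (q : T)
    (h1 : star q = q) (h2 : q * q = q) : ‖q‖ ≤ 1 := by
  have h : ‖q‖ * ‖q‖ = ‖q‖ := by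
    calc ‖q‖ * ‖q‖ = ‖star q * q‖ := CStarRing.norm_star_mul_self.symm
    _ = ‖q‖ := by rw [h1, h2]
  nlinarith [norm_nonneg q, sq_nonneg (‖q‖ - 1)]

lemma contract_left {T : Type} [NonUnitalCStarAlgebra T] (q x : T)
    (h1 : star q = q) (h2 : q * q = q) : ‖x - q * x‖ ≤ ‖x‖ := by
  have hz : (star x * q) * (x - q * x) = 0 := by
    rw [mul_sub]
    have : star x * q * (q * x) = star x * q * x := by
      rw [← mul_assoc, mul_assoc (star x) q q, h2]
    rw [this, sub_self]
  have key : star (x - q * x) * (x - q * x) = star x * (x - q * x) := by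
    rw [star_sub, star_mul, h1, sub_mul, hz, sub_zero]
  have hn : ‖x - q * x‖ * ‖x - q * x‖ ≤ ‖x‖ * ‖x - q * x‖ := by
    calc ‖x - q * x‖ * ‖x - q * x‖ = ‖star (x - q * x) * (x - q * x)‖ :=
          CStarRing.norm_star_mul_self.symm
    _ = ‖star x * (x - q * x)‖ := by rw [key]
    _ ≤ ‖star x‖ * ‖x - q * x‖ := norm_mul_le _ _
    _ = ‖x‖ * ‖x - q * x‖ := by rw [norm_star]
  rcases (norm_nonneg (x - q * x)).lt_or_eq with h | h
  · exact le_of_mul_le_mul_right hn h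
  · rw [← h]; exact norm_nonneg x

lemma contract_right {T : Type} [NonUnitalCStarAlgebra T] (q x : T)
    (h1 : star q = q) (h2 : q * q = q) : ‖x - x * q‖ ≤ ‖x‖ := by
  have hz : (x - x * q) * (q * star x) = 0 := by
    rw [sub_mul]
    have : x * q * (q * star x) = x * (q * star x) := by
      rw [← mul_assoc, mul_assoc x q q, h2, mul_assoc]
    rw [this, sub_self]
  have key : (x - x * q) * star (x - x * q) = (x - x * q) * star x := by
    rw [star_sub, star_mul, h1, mul_sub, hz, sub_zero]
  have hn : ‖x - x * q‖ * ‖x - x * q‖ ≤ ‖x - x * q‖ * ‖x‖ := by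
    calc ‖x - x * q‖ * ‖x - x * q‖ = ‖(x - x * q) * star (x - x * q)‖ :=
          CStarRing.norm_self_mul_star.symm
    _ = ‖(x - x * q) * star x‖ := by rw [key]
    _ ≤ ‖x - x * q‖ * ‖star x‖ := norm_mul_le _ _
    _ = ‖x - x * q‖ * ‖x‖ := by rw [norm_star]
  rcases (norm_nonneg (x - x * q)).lt_or_eq with h | h
  · exact le_of_mul_le_mul_left hn h
  · rw [← h]; exact norm_nonneg x

/-- If `{d n}` is an orthogonal approximate unit for a relative σ-unital pair `(A, D)`,
then `{d n ⊗ e_{m,m}}_{n,m}` is an orthogonal approximate unit for the relative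
stabilization `(A ⊗ K, D ⊗ C)`; in particular `(A ⊗ K, D ⊗ C)` is relative σ-unital. -/
theorem stabilization_relSigmaUnital
    {A T : Type} [NonUnitalCStarAlgebra A] [NonUnitalCStarAlgebra T]
    (D : Set A) (hD : IsCStarSubalgebra D)
    (ι : A → ℕ → ℕ → T) (hι : IsStabilization ι)
    (d : ℕ → A) (hdD : ∀ n, d n ∈ D) (hdpos : ∀ n, ∃ c : A, d n = star c * c)
    (hdsum : StrictPartialSumOne d)
    (hdorth : ∀ x ∈ D, ∀ n m : ℕ, n ≠ m → d n * x * d m = 0) :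
    (∀ n m : ℕ, ι (d n) m m ∈ diagTensor ι D) ∧
    (∀ n m : ℕ, ∃ c : T, ι (d n) m m = star c * c) ∧
    (∀ t : T, HasSum (fun p : ℕ × ℕ => ι (d p.1) p.2 p.2 * t) t) ∧
    (∀ t : T, HasSum (fun p : ℕ × ℕ => t * ι (d p.1) p.2 p.2) t) ∧
    (∀ x ∈ diagTensor ι D, ∀ p q : ℕ × ℕ, p ≠ q →
      ι (d p.1) p.2 p.2 * x * ι (d q.1) q.2 q.2 = 0) := by
  obtain ⟨hadd, hsmulι, hmulι, hstarι, hnormι, hdense⟩ := hι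
  -- basic facts about ι
  have hzero : ∀ i j, ι (0:A) i j = 0 := fun i j =>
    norm_eq_zero.mp (by rw [hnormι, norm_zero])
  have hneg : ∀ a i j, ι (-a) i j = - ι a i j := by
    intro a i j
    simpa [neg_smul, one_smul] using hsmulι (-1 : ℂ) a i j
  have hsub : ∀ a b i j, ι (a - b) i j = ι a i j - ι b i j := by
    intro a b i j; rw [sub_eq_add_neg, hadd, hneg, sub_eq_add_neg]
  have hsum_iota : ∀ (s : Finset ℕ) (f : ℕ → A) (i j : ℕ),
      ι (∑ n ∈ s, f n) i j = ∑ n ∈ s, ι (f n) i j := by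
    intro s f i j
    induction s using Finset.cons_induction with
    | empty => simpa using hzero i j
    | cons n s hns ih => rw [Finset.sum_cons, Finset.sum_cons, hadd, ih]
  -- basic facts about d
  have hsa : ∀ n, star (d n) = d n := by
    intro n; obtain ⟨c, hc⟩ := hdpos n; rw [hc, star_mul, star_star]
  have horth : ∀ n m, n ≠ m → d n * d m = 0 := by
    intro n m hnm
    have h0 : d n * d m * d m = 0 := hdorth (d m) (hdD m) n m hnm
    have h2 : d n * d m * star (d n * d m) = 0 := by
      rw [star_mul, hsa n, hsa m, ← mul_assoc, h0, zero_mul]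
    have h3 : ‖d n * d m‖ * ‖d n * d m‖ = 0 := by
      rw [← CStarRing.norm_self_mul_star, h2, norm_zero]
    exact norm_eq_zero.mp (mul_self_eq_zero.mp h3)
  have hproj : ∀ n, d n * d n = d n := by
    intro n
    have h2 : ∀ N, n + 1 ≤ N → (∑ k ∈ Finset.range N, d k) * d n = d n * d n := by
      intro N hN
      rw [Finset.sum_mul]
      exact Finset.sum_eq_single n (fun k _ hk => horth k n hk)
        (fun h => absurd (Finset.mem_range.mpr hN) h)
    have h3 : Tendsto (fun N => (∑ k ∈ Finset.range N, d k) * d n) atTop (𝓝 (d n * d n)) := by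
      refine Tendsto.congr' ?_ tendsto_const_nhds
      filter_upwards [eventually_ge_atTop (n+1)] with N hN
      exact (h2 N hN).symm
    exact tendsto_nhds_unique h3 (hdsum.1 (d n))
  -- sums of d over finsets are projections
  have hQ : ∀ s : Finset ℕ, (∑ n ∈ s, d n) * ∑ n ∈ s, d n = ∑ n ∈ s, d n := by
    intro s
    rw [Finset.sum_mul_sum]
    refine Finset.sum_congr rfl fun i hi => ?_
    exact Finset.sum_eq_single i (fun j _ hj => horth i j (Ne.symm hj))
      (fun h => absurd hi h) |>.trans (hproj i)
  have hQsa : ∀ s : Finset ℕ, star (∑ n ∈ s, d n) = ∑ n ∈ s, d n := by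
    intro s; rw [star_sum]; exact Finset.sum_congr rfl fun n _ => hsa n
  have hQd : ∀ s t : Finset ℕ, (∀ n ∈ s, n ∉ t) →
      (∑ n ∈ s, d n) * ∑ n ∈ t, d n = 0 := by
    intro s t hst
    rw [Finset.sum_mul_sum]
    refine Finset.sum_eq_zero fun i hi => Finset.sum_eq_zero fun j hj => horth i j ?_
    rintro rfl; exact hst i hi hj
  -- products of the ι (d n) m m
  have hmulP : ∀ (p q : ℕ × ℕ),
      ι (d p.1) p.2 p.2 * ι (d q.1) q.2 q.2 = if p = q then ι (d p.1) p.2 p.2 else 0 := by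
    rintro ⟨n, m⟩ ⟨n', m'⟩
    rw [hmulι]
    by_cases hm : m = m'
    · subst hm
      by_cases hn : n = n'
      · subst hn; simp [hproj]
      · simp [hn, horth n n' hn, hzero, Prod.ext_iff]
    · simp [hm, Prod.ext_iff]
  have hPsa : ∀ F : Finset (ℕ × ℕ), star (∑ p ∈ F, ι (d p.1) p.2 p.2) = ∑ p ∈ F, ι (d p.1) p.2 p.2 := by
    intro F; rw [star_sum]
    exact Finset.sum_congr rfl fun p _ => by rw [hstarι, hsa]
  have hPsq : ∀ F : Finset (ℕ × ℕ),
      (∑ p ∈ F, ι (d p.1) p.2 p.2) * ∑ p ∈ F, ι (d p.1) p.2 p.2 = ∑ p ∈ F, ι (d p.1) p.2 p.2 := by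
    intro F
    rw [Finset.sum_mul_sum]
    refine Finset.sum_congr rfl fun p hp => ?_
    refine (Finset.sum_eq_single p (fun q _ hq => by rw [hmulP, if_neg (Ne.symm hq)])
      (fun h => absurd hp h)).trans ?_
    rw [hmulP, if_pos rfl]
  have hPnorm : ∀ F : Finset (ℕ × ℕ), ‖∑ p ∈ F, ι (d p.1) p.2 p.2‖ ≤ 1 :=
    fun F => proj_norm_le_one _ (hPsa F) (hPsq F)
  -- generator estimates
  have hgenL : ∀ (a : A) (i j N : ℕ) (F : Finset (ℕ × ℕ)), Finset.range N ×ˢ {i} ⊆ F →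
      ‖(∑ p ∈ F, ι (d p.1) p.2 p.2) * ι a i j - ι a i j‖
        ≤ ‖(∑ n ∈ Finset.range N, d n) * a - a‖ := by
    intro a i j N F hF
    have hinj : ∀ p ∈ F.filter (fun p : ℕ × ℕ => p.2 = i), ∀ q ∈ F.filter (fun p : ℕ × ℕ => p.2 = i),
        p.1 = q.1 → p = q := by
      intro p hp q hq h
      have hp2 := (Finset.mem_filter.mp hp).2
      have hq2 := (Finset.mem_filter.mp hq).2
      exact Prod.ext h (hp2.trans hq2.symm)
    have hstep : (∑ p ∈ F, ι (d p.1) p.2 p.2) * ι a i j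
        = ι ((∑ n ∈ (F.filter (fun p : ℕ × ℕ => p.2 = i)).image Prod.fst, d n) * a) i j := by
      calc (∑ p ∈ F, ι (d p.1) p.2 p.2) * ι a i j
          = ∑ p ∈ F, ι (d p.1) p.2 p.2 * ι a i j := Finset.sum_mul _ _ _
        _ = ∑ p ∈ F, (if p.2 = i then ι (d p.1 * a) i j else 0) := by
            refine Finset.sum_congr rfl fun p _ => ?_
            rw [hmulι]
            by_cases h : p.2 = i
            · rw [if_pos h, if_pos h, h]
            · rw [if_neg h, if_neg h]
        _ = ∑ p ∈ F.filter (fun p : ℕ × ℕ => p.2 = i), ι (d p.1 * a) i j :=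
            (Finset.sum_filter _ _).symm
        _ = ∑ n ∈ (F.filter (fun p : ℕ × ℕ => p.2 = i)).image Prod.fst, ι (d n * a) i j :=
            (Finset.sum_image (f := fun n => ι (d n * a) i j) hinj).symm
        _ = ι ((∑ n ∈ (F.filter (fun p : ℕ × ℕ => p.2 = i)).image Prod.fst, d n) * a) i j := by
            rw [Finset.sum_mul, hsum_iota]
    have hNS : Finset.range N ⊆ (F.filter (fun p : ℕ × ℕ => p.2 = i)).image Prod.fst := by
      intro n hn
      have hmem : (n, i) ∈ F := hF (Finset.mem_product.mpr ⟨hn, Finset.mem_singleton_self _⟩)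
      exact Finset.mem_image.mpr ⟨(n, i), Finset.mem_filter.mpr ⟨hmem, rfl⟩, rfl⟩
    rw [hstep, ← hsub, hnormι]
    set S := (F.filter (fun p : ℕ × ℕ => p.2 = i)).image Prod.fst with hS
    have hqP : (∑ n ∈ S \ Finset.range N, d n) * ∑ n ∈ Finset.range N, d n = 0 :=
      hQd _ _ fun n hn => (Finset.mem_sdiff.mp hn).2
    have key : (∑ n ∈ S, d n) * a - a
        = ((∑ n ∈ Finset.range N, d n) * a - a)
          - (∑ n ∈ S \ Finset.range N, d n) * ((∑ n ∈ Finset.range N, d n) * a - a) := by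
      rw [← Finset.sum_sdiff hNS, add_mul, mul_sub, ← mul_assoc, hqP, zero_mul, zero_sub]
      abel
    rw [key]
    exact contract_left _ _ (hQsa _) (hQ _)
  have hgenR : ∀ (a : A) (i j N : ℕ) (F : Finset (ℕ × ℕ)), Finset.range N ×ˢ {j} ⊆ F →
      ‖ι a i j * (∑ p ∈ F, ι (d p.1) p.2 p.2) - ι a i j‖
        ≤ ‖a * (∑ n ∈ Finset.range N, d n) - a‖ := by
    intro a i j N F hF
    have hinj : ∀ p ∈ F.filter (fun p : ℕ × ℕ => p.2 = j), ∀ q ∈ F.filter (fun p : ℕ × ℕ => p.2 = j),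
        p.1 = q.1 → p = q := by
      intro p hp q hq h
      have hp2 := (Finset.mem_filter.mp hp).2
      have hq2 := (Finset.mem_filter.mp hq).2
      exact Prod.ext h (hp2.trans hq2.symm)
    have hstep : ι a i j * (∑ p ∈ F, ι (d p.1) p.2 p.2)
        = ι (a * ∑ n ∈ (F.filter (fun p : ℕ × ℕ => p.2 = j)).image Prod.fst, d n) i j := by
      calc ι a i j * (∑ p ∈ F, ι (d p.1) p.2 p.2)
          = ∑ p ∈ F, ι a i j * ι (d p.1) p.2 p.2 := Finset.mul_sum _ _ _
        _ = ∑ p ∈ F, (if p.2 = j then ι (a * d p.1) i j else 0) := by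
            refine Finset.sum_congr rfl fun p _ => ?_
            rw [hmulι]
            by_cases h : p.2 = j
            · rw [if_pos h.symm, if_pos h, h]
            · rw [if_neg (fun hh => h hh.symm), if_neg h]
        _ = ∑ p ∈ F.filter (fun p : ℕ × ℕ => p.2 = j), ι (a * d p.1) i j :=
            (Finset.sum_filter _ _).symm
        _ = ∑ n ∈ (F.filter (fun p : ℕ × ℕ => p.2 = j)).image Prod.fst, ι (a * d n) i j :=
            (Finset.sum_image (f := fun n => ι (a * d n) i j) hinj).symm
        _ = ι (a * ∑ n ∈ (F.filter (fun p : ℕ × ℕ => p.2 = j)).image Prod.fst, d n) i j := by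
            rw [Finset.mul_sum, hsum_iota]
    have hNS : Finset.range N ⊆ (F.filter (fun p : ℕ × ℕ => p.2 = j)).image Prod.fst := by
      intro n hn
      have hmem : (n, j) ∈ F := hF (Finset.mem_product.mpr ⟨hn, Finset.mem_singleton_self _⟩)
      exact Finset.mem_image.mpr ⟨(n, j), Finset.mem_filter.mpr ⟨hmem, rfl⟩, rfl⟩
    rw [hstep, ← hsub, hnormι]
    set S := (F.filter (fun p : ℕ × ℕ => p.2 = j)).image Prod.fst with hS
    have hPq : (∑ n ∈ Finset.range N, d n) * ∑ n ∈ S \ Finset.range N, d n = 0 :=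
      hQd _ _ fun n hn hmem => (Finset.mem_sdiff.mp hmem).2 hn
    have key : a * (∑ n ∈ S, d n) - a
        = (a * (∑ n ∈ Finset.range N, d n) - a)
          - (a * (∑ n ∈ Finset.range N, d n) - a) * (∑ n ∈ S \ Finset.range N, d n) := by
      rw [← Finset.sum_sdiff hNS, mul_add, sub_mul, mul_assoc, hPq, mul_zero, zero_sub]
      abel
    rw [key]
    exact contract_right _ _ (hQsa _) (hQ _)
  -- approximation on the span
  have hspanL : ∀ t ∈ Submodule.span ℂ {t : T | ∃ a i j, t = ι a i j}, ∀ ε : ℝ, 0 < ε →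
      ∃ F₀ : Finset (ℕ × ℕ), ∀ F, F₀ ⊆ F →
        ‖(∑ p ∈ F, ι (d p.1) p.2 p.2) * t - t‖ < ε := by
    intro t ht
    induction ht using Submodule.span_induction with
    | mem x hx =>
      obtain ⟨a, i, j, rfl⟩ := hx
      intro ε hε
      obtain ⟨N, hN⟩ := Metric.tendsto_atTop.mp (hdsum.1 a) ε hε
      refine ⟨Finset.range N ×ˢ {i}, fun F hF => ?_⟩
      have h2 := hN N le_rfl
      rw [dist_eq_norm] at h2
      exact lt_of_le_of_lt (hgenL a i j N F hF) h2
    | zero => exact fun ε hε => ⟨∅, fun F _ => by simpa using hε⟩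
    | add x y hx hy ihx ihy =>
      intro ε hε
      obtain ⟨F₁, h₁⟩ := ihx (ε/2) (by linarith)
      obtain ⟨F₂, h₂⟩ := ihy (ε/2) (by linarith)
      refine ⟨F₁ ∪ F₂, fun F hF => ?_⟩
      have e1 := h₁ F (Finset.union_subset_iff.mp hF).1
      have e2 := h₂ F (Finset.union_subset_iff.mp hF).2
      have hdec : (∑ p ∈ F, ι (d p.1) p.2 p.2) * (x + y) - (x + y)
          = ((∑ p ∈ F, ι (d p.1) p.2 p.2) * x - x)
            + ((∑ p ∈ F, ι (d p.1) p.2 p.2) * y - y) := by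
        rw [mul_add]; abel
      rw [hdec]
      calc ‖_ + _‖ ≤ ‖(∑ p ∈ F, ι (d p.1) p.2 p.2) * x - x‖
            + ‖(∑ p ∈ F, ι (d p.1) p.2 p.2) * y - y‖ := norm_add_le _ _
        _ < ε/2 + ε/2 := add_lt_add e1 e2
        _ = ε := by linarith
    | smul c x hx ihx =>
      intro ε hε
      obtain ⟨F₀, h₀⟩ := ihx (ε / (‖c‖ + 1)) (by positivity)
      refine ⟨F₀, fun F hF => ?_⟩
      have e := h₀ F hF
      have heq : (∑ p ∈ F, ι (d p.1) p.2 p.2) * (c • x) - c • x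
          = c • ((∑ p ∈ F, ι (d p.1) p.2 p.2) * x - x) := by
        rw [mul_smul_comm, smul_sub]
      rw [heq, norm_smul]
      have hc : (0:ℝ) ≤ ‖c‖ := norm_nonneg c
      calc ‖c‖ * ‖(∑ p ∈ F, ι (d p.1) p.2 p.2) * x - x‖
          ≤ ‖c‖ * (ε / (‖c‖ + 1)) := mul_le_mul_of_nonneg_left e.le hc
        _ < (‖c‖ + 1) * (ε / (‖c‖ + 1)) :=
            mul_lt_mul_of_pos_right (by linarith) (by positivity)
        _ = ε := by field_simp
  have hspanR : ∀ t ∈ Submodule.span ℂ {t : T | ∃ a i j, t = ι a i j}, ∀ ε : ℝ, 0 < ε →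
      ∃ F₀ : Finset (ℕ × ℕ), ∀ F, F₀ ⊆ F →
        ‖t * (∑ p ∈ F, ι (d p.1) p.2 p.2) - t‖ < ε := by
    intro t ht
    induction ht using Submodule.span_induction with
    | mem x hx =>
      obtain ⟨a, i, j, rfl⟩ := hx
      intro ε hε
      obtain ⟨N, hN⟩ := Metric.tendsto_atTop.mp (hdsum.2 a) ε hε
      refine ⟨Finset.range N ×ˢ {j}, fun F hF => ?_⟩
      have h2 := hN N le_rfl
      rw [dist_eq_norm] at h2
      exact lt_of_le_of_lt (hgenR a i j N F hF) h2
    | zero => exact fun ε hε => ⟨∅, fun F _ => by simpa using hε⟩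
    | add x y hx hy ihx ihy =>
      intro ε hε
      obtain ⟨F₁, h₁⟩ := ihx (ε/2) (by linarith)
      obtain ⟨F₂, h₂⟩ := ihy (ε/2) (by linarith)
      refine ⟨F₁ ∪ F₂, fun F hF => ?_⟩
      have e1 := h₁ F (Finset.union_subset_iff.mp hF).1
      have e2 := h₂ F (Finset.union_subset_iff.mp hF).2
      have hdec : (x + y) * (∑ p ∈ F, ι (d p.1) p.2 p.2) - (x + y)
          = (x * (∑ p ∈ F, ι (d p.1) p.2 p.2) - x)
            + (y * (∑ p ∈ F, ι (d p.1) p.2 p.2) - y) := by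
        rw [add_mul]; abel
      rw [hdec]
      calc ‖_ + _‖ ≤ ‖x * (∑ p ∈ F, ι (d p.1) p.2 p.2) - x‖
            + ‖y * (∑ p ∈ F, ι (d p.1) p.2 p.2) - y‖ := norm_add_le _ _
        _ < ε/2 + ε/2 := add_lt_add e1 e2
        _ = ε := by linarith
    | smul c x hx ihx =>
      intro ε hε
      obtain ⟨F₀, h₀⟩ := ihx (ε / (‖c‖ + 1)) (by positivity)
      refine ⟨F₀, fun F hF => ?_⟩
      have e := h₀ F hF
      have heq : (c • x) * (∑ p ∈ F, ι (d p.1) p.2 p.2) - c • x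
          = c • (x * (∑ p ∈ F, ι (d p.1) p.2 p.2) - x) := by
        rw [smul_mul_assoc, smul_sub]
      rw [heq, norm_smul]
      have hc : (0:ℝ) ≤ ‖c‖ := norm_nonneg c
      calc ‖c‖ * ‖x * (∑ p ∈ F, ι (d p.1) p.2 p.2) - x‖
          ≤ ‖c‖ * (ε / (‖c‖ + 1)) := mul_le_mul_of_nonneg_left e.le hc
        _ < (‖c‖ + 1) * (ε / (‖c‖ + 1)) :=
            mul_lt_mul_of_pos_right (by linarith) (by positivity)
        _ = ε := by field_simp
  -- the HasSum statements
  have mainL : ∀ t : T, HasSum (fun p : ℕ × ℕ => ι (d p.1) p.2 p.2 * t) t := by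
    intro t
    refine Metric.tendsto_atTop.mpr ?_
    intro ε hε
    obtain ⟨t', ht'span, ht'close⟩ :=
      Metric.mem_closure_iff.mp (hdense t) (ε/3) (by linarith)
    obtain ⟨F₀, hF₀⟩ := hspanL t' ht'span (ε/3) (by linarith)
    refine ⟨F₀, fun F hF => ?_⟩
    have hsum_eq : ∑ p ∈ F, ι (d p.1) p.2 p.2 * t = (∑ p ∈ F, ι (d p.1) p.2 p.2) * t :=
      (Finset.sum_mul _ _ _).symm
    rw [dist_eq_norm, hsum_eq]
    have hdec : (∑ p ∈ F, ι (d p.1) p.2 p.2) * t - t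
        = (∑ p ∈ F, ι (d p.1) p.2 p.2) * (t - t')
          + ((∑ p ∈ F, ι (d p.1) p.2 p.2) * t' - t') + (t' - t) := by
      rw [mul_sub]; abel
    rw [hdec]
    have n1 : ‖(∑ p ∈ F, ι (d p.1) p.2 p.2) * (t - t')‖ ≤ ‖t - t'‖ := by
      calc ‖(∑ p ∈ F, ι (d p.1) p.2 p.2) * (t - t')‖
          ≤ ‖∑ p ∈ F, ι (d p.1) p.2 p.2‖ * ‖t - t'‖ := norm_mul_le _ _
        _ ≤ 1 * ‖t - t'‖ := mul_le_mul_of_nonneg_right (hPnorm F) (norm_nonneg _)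
        _ = ‖t - t'‖ := one_mul _
    have n2 : ‖(∑ p ∈ F, ι (d p.1) p.2 p.2) * t' - t'‖ < ε/3 := hF₀ F hF
    have n3 : ‖t - t'‖ < ε/3 := by rw [← dist_eq_norm]; exact ht'close
    calc ‖_ + _ + _‖ ≤ ‖(∑ p ∈ F, ι (d p.1) p.2 p.2) * (t - t')‖
          + ‖(∑ p ∈ F, ι (d p.1) p.2 p.2) * t' - t'‖ + ‖t' - t‖ := norm_add₃_le
      _ < ε := by rw [norm_sub_rev t' t]; linarith
  have mainR : ∀ t : T, HasSum (fun p : ℕ × ℕ => t * ι (d p.1) p.2 p.2) t := by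
    intro t
    refine Metric.tendsto_atTop.mpr ?_
    intro ε hε
    obtain ⟨t', ht'span, ht'close⟩ :=
      Metric.mem_closure_iff.mp (hdense t) (ε/3) (by linarith)
    obtain ⟨F₀, hF₀⟩ := hspanR t' ht'span (ε/3) (by linarith)
    refine ⟨F₀, fun F hF => ?_⟩
    have hsum_eq : ∑ p ∈ F, t * ι (d p.1) p.2 p.2 = t * (∑ p ∈ F, ι (d p.1) p.2 p.2) :=
      (Finset.mul_sum _ _ _).symm
    rw [dist_eq_norm, hsum_eq]
    have hdec : t * (∑ p ∈ F, ι (d p.1) p.2 p.2) - t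
        = (t - t') * (∑ p ∈ F, ι (d p.1) p.2 p.2)
          + (t' * (∑ p ∈ F, ι (d p.1) p.2 p.2) - t') + (t' - t) := by
      rw [sub_mul]; abel
    rw [hdec]
    have n1 : ‖(t - t') * (∑ p ∈ F, ι (d p.1) p.2 p.2)‖ ≤ ‖t - t'‖ := by
      calc ‖(t - t') * (∑ p ∈ F, ι (d p.1) p.2 p.2)‖
          ≤ ‖t - t'‖ * ‖∑ p ∈ F, ι (d p.1) p.2 p.2‖ := norm_mul_le _ _
        _ ≤ ‖t - t'‖ * 1 := mul_le_mul_of_nonneg_left (hPnorm F) (norm_nonneg _)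
        _ = ‖t - t'‖ := mul_one _
    have n2 : ‖t' * (∑ p ∈ F, ι (d p.1) p.2 p.2) - t'‖ < ε/3 := hF₀ F hF
    have n3 : ‖t - t'‖ < ε/3 := by rw [← dist_eq_norm]; exact ht'close
    calc ‖_ + _ + _‖ ≤ ‖(t - t') * (∑ p ∈ F, ι (d p.1) p.2 p.2)‖
          + ‖t' * (∑ p ∈ F, ι (d p.1) p.2 p.2) - t'‖ + ‖t' - t‖ := norm_add₃_le
      _ < ε := by rw [norm_sub_rev t' t]; linarith
  refine ⟨?_, ?_, mainL, mainR, ?_⟩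
  · intro n m
    unfold diagTensor
    exact subset_closure (Submodule.subset_span ⟨d n, hdD n, m, rfl⟩)
  · intro n m
    obtain ⟨c, hc⟩ := hdpos n
    refine ⟨ι c m m, ?_⟩
    rw [hstarι, hmulι, if_pos rfl, ← hc]
  · intro x hx p q hpq
    unfold diagTensor at hx
    have hcont : Continuous fun y : T => ι (d p.1) p.2 p.2 * y * ι (d q.1) q.2 q.2 :=
      (continuous_const.mul continuous_id).mul continuous_const
    have hcl : IsClosed {y : T | ι (d p.1) p.2 p.2 * y * ι (d q.1) q.2 q.2 = 0} :=
      isClosed_eq hcont continuous_const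
    have hsub' : (Submodule.span ℂ {t : T | ∃ e ∈ D, ∃ k : ℕ, t = ι e k k} : Set T)
        ⊆ {y : T | ι (d p.1) p.2 p.2 * y * ι (d q.1) q.2 q.2 = 0} := by
      intro y hy
      induction hy using Submodule.span_induction with
      | mem z hz =>
        obtain ⟨e, heD, k, rfl⟩ := hz
        show ι (d p.1) p.2 p.2 * ι e k k * ι (d q.1) q.2 q.2 = 0
        rw [hmulι]
        by_cases h1 : p.2 = k
        · rw [if_pos h1, hmulι]
          by_cases h2 : k = q.2
          · rw [if_pos h2]
            have hne : p.1 ≠ q.1 := by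
              intro h
              exact hpq (by rw [Prod.ext_iff]; exact ⟨h, h1.trans h2⟩)
            rw [hdorth e heD p.1 q.1 hne]
            exact hzero _ _
          · rw [if_neg h2]
        · rw [if_neg h1, zero_mul]
      | zero =>
        show ι (d p.1) p.2 p.2 * (0:T) * ι (d q.1) q.2 q.2 = 0
        rw [mul_zero, zero_mul]
      | add u v hu hv ihu ihv =>
        show ι (d p.1) p.2 p.2 * (u + v) * ι (d q.1) q.2 q.2 = 0
        have ihu' : ι (d p.1) p.2 p.2 * u * ι (d q.1) q.2 q.2 = 0 := ihu
        have ihv' : ι (d p.1) p.2 p.2 * v * ι (d q.1) q.2 q.2 = 0 := ihv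
        rw [mul_add, add_mul, ihu', ihv', add_zero]
      | smul c u hu ihu =>
        show ι (d p.1) p.2 p.2 * (c • u) * ι (d q.1) q.2 q.2 = 0
        have ihu' : ι (d p.1) p.2 p.2 * u * ι (d q.1) q.2 q.2 = 0 := ihu
        rw [mul_smul_comm, smul_mul_assoc, ihu', smul_zero]
    exact closure_minimal hsub' hcl hx
end
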